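/- arXiv:1801.02152 — 5 statements merged into one kernel-verified Lean document; each statement's English description precedes it below -/
import Mathlib

section
/- Let m ≥ 1 and let B be an m×m matrix over F₂. Then the digital net generated by (I, B, B²) is a (0,m,3)-net over F₂ if and only if there exists a nonsingular lower-triangular m×m matrix L over F₂ such that B = L·P_m·J_m·L⁻¹. -/
open Matrix

/-- The vector of binary digits of `l` (least significant first). -/
def digitsVec (m l : ℕ) : Fin m → ZMod 2 := fun k => if l.testBit k.val then 1 else 0

/-- The map φ sending a bit vector to a real number in [0,1). -/
noncomputable def phiMap (m : ℕ) (y : Fin m → ZMod 2) : ℝ :=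
  ∑ k : Fin m, ((y k).val : ℝ) / 2 ^ (k.val + 1)

/-- The digital net (as a multiset of `2^m` points in `[0,1)^s`) generated by
matrices `C 0, …, C (s-1)`. -/
noncomputable def digitalNet (m s : ℕ) (C : Fin s → Matrix (Fin m) (Fin m) (ZMod 2)) :
    Multiset (Fin s → ℝ) :=
  (Multiset.range (2 ^ m)).map fun l => fun j => phiMap m ((C j).mulVec (digitsVec m l))

open Classical in
/-- `P` is a `(t,m,s)`-net over `F₂`: every elementary interval of volume `2^{t-m}`
contains exactly `2^t` points of `P`, counted with multiplicity. -/
def IsNet (t m s : ℕ) (P : Multiset (Fin s → ℝ)) : Prop :=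
  ∀ d : Fin s → ℕ, (∑ i, d i) = m - t →
    ∀ a : Fin s → ℕ, (∀ i, a i < 2 ^ d i) →
      (P.countP fun x => ∀ i,
        ((a i : ℝ) / 2 ^ d i ≤ x i ∧ x i < ((a i : ℝ) + 1) / 2 ^ d i)) = 2 ^ t

/-- The anti-diagonal matrix `J_m` over `F₂`. -/
def Jmat (m : ℕ) : Matrix (Fin m) (Fin m) (ZMod 2) :=
  Matrix.of fun i j => if i.val + j.val = m - 1 then 1 else 0

/-- The upper-triangular Pascal matrix `P_m` over `F₂` (0-indexed entry `(i,j)` is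
`binom(j,i) mod 2`). -/
def Pmat (m : ℕ) : Matrix (Fin m) (Fin m) (ZMod 2) :=
  Matrix.of fun i j => ((j.val.choose i.val : ℕ) : ZMod 2)

/-- A matrix is lower triangular. -/
def IsLowerTri {m : ℕ} (L : Matrix (Fin m) (Fin m) (ZMod 2)) : Prop :=
  ∀ i j : Fin m, i < j → L i j = 0

/-!
Under `v ↦ ∑ vᵢ Xⁱ` the space `F₂ᵐ` becomes the polynomials of degree `< m`, on which `P_m` acts
as `f(X) ↦ f(X + 1)` and `J_m` as `f ↦ X^(m-1) f(1/X)`; these generate a copy of `S₃`, and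
`(P J)² = J P`. The first `a` coordinates of `v` vanish iff `Xᵃ` divides its polynomial.

A digital net is a `(0,m,s)`-net iff for every `d` with `∑ dⱼ = m` the first `dⱼ` rows of the
`Cⱼ` together form a nonsingular matrix. For `(I, Q, Q²)` with `Q = P J`, a kernel vector `v`
would have a polynomial divisible by `Xᶜ (X + 1)ᵇ` of degree `< b + c`, hence `v = 0`; the
condition is invariant under conjugation by lower-triangular matrices, which preserve the flag of
coordinate subspaces.

Conversely, if `(I, B, B²)` satisfies the condition, the space `W(a,b,c)` of vectors `v` such
that the first `a`, `b`, `c` coordinates of `v`, `B v`, `B² v` vanish is a line whenever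
`a + b + c = m - 1`. Its nonzero vectors `ν(a,b,c)` satisfy `ν(a,b+1,c) = ν(a+1,b,c) + ν(a,b,c+1)`
and `B ν(0,b,c) = ν(b,c,0)`, exactly like the polynomials `Xᵃ (X + 1)ᵇ` under `Q`. So with `L`
the unitriangular matrix of columns `ν(t,0,m-1-t)`, `ν(a,b,c) = L (Xᵃ (X + 1)ᵇ)`, and comparing
columns gives `B L Q = L J P = L Q²`, i.e. `B = L Q L⁻¹`.
-/

open Matrix Finset Polynomial

/-! ### Binary expansions -/

/-- The number with binary digits `u 0, …, u (d - 1)`, most significant digit first. -/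
def binaryValue : (d : ℕ) → (Fin d → ZMod 2) → ℕ
  | 0, _ => 0
  | d + 1, u => (u 0).val * 2 ^ d + binaryValue d (Fin.tail u)

lemma binaryValue_lt (d : ℕ) (u : Fin d → ZMod 2) : binaryValue d u < 2 ^ d := by
  induction d with
  | zero => simp [binaryValue]
  | succ d ih =>
    have := ih (Fin.tail u)
    have : (u 0).val ≤ 1 := Nat.le_of_lt_succ (ZMod.val_lt (u 0))
    rw [binaryValue, pow_succ]
    nlinarith

lemma binaryValue_injective (d : ℕ) : Function.Injective (binaryValue d) := by
  induction d with
  | zero => exact fun u v _ => Subsingleton.elim u v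
  | succ d ih =>
    intro u v h
    have hu := binaryValue_lt d (Fin.tail u)
    have hv := binaryValue_lt d (Fin.tail v)
    simp only [binaryValue] at h
    rw [mul_comm (u 0).val, mul_comm (v 0).val] at h
    have h0 : (u 0).val = (v 0).val := by
      have := congrArg (· / 2 ^ d) h
      simpa [Nat.mul_add_div (by positivity : 0 < 2 ^ d), Nat.div_eq_of_lt hu,
        Nat.div_eq_of_lt hv] using this
    rw [h0] at h
    rw [← Fin.cons_self_tail u, ← Fin.cons_self_tail v, ZMod.val_injective 2 h0,
      ih (Nat.add_left_cancel h)]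

lemma exists_binaryValue_eq {d a : ℕ} (ha : a < 2 ^ d) : ∃ u, binaryValue d u = a := by
  have hbij : Function.Bijective fun u => (⟨_, binaryValue_lt d u⟩ : Fin (2 ^ d)) := by
    rw [Fintype.bijective_iff_injective_and_card]
    exact ⟨fun u v h => binaryValue_injective d (Fin.val_eq_of_eq h), by simp⟩
  obtain ⟨u, hu⟩ := hbij.2 ⟨a, ha⟩
  exact ⟨u, congrArg Fin.val hu⟩

lemma phiMap_nonneg (m : ℕ) (y : Fin m → ZMod 2) : 0 ≤ phiMap m y :=
  sum_nonneg fun _ _ => by positivity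

lemma phiMap_succ (m : ℕ) (y : Fin (m + 1) → ZMod 2) :
    phiMap (m + 1) y = ((y 0).val + phiMap m (Fin.tail y)) / 2 := by
  simp only [phiMap, Fin.sum_univ_succ, Fin.val_zero, Fin.val_succ, Fin.tail, add_div, sum_div,
    pow_succ]
  simp [div_div, mul_comm]

lemma phiMap_lt_one (m : ℕ) (y : Fin m → ZMod 2) : phiMap m y < 1 := by
  induction m with
  | zero => simp [phiMap]
  | succ m ih =>
    have : ((y 0).val : ℝ) ≤ 1 := by exact_mod_cast Nat.le_of_lt_succ (ZMod.val_lt (y 0))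
    rw [phiMap_succ]
    linarith [ih (Fin.tail y)]

lemma floor_two_pow_mul_phiMap {d m : ℕ} (h : d ≤ m) (y : Fin m → ZMod 2) :
    ⌊2 ^ d * phiMap m y⌋₊ = binaryValue d (y ∘ Fin.castLE h) := by
  induction d generalizing m with
  | zero => simpa [binaryValue] using phiMap_lt_one m y
  | succ d ih =>
    obtain ⟨m, rfl⟩ : ∃ m', m = m' + 1 := ⟨m - 1, by omega⟩
    have hsplit : 2 ^ (d + 1) * phiMap (m + 1) y =
        2 ^ d * phiMap m (Fin.tail y) + ((y 0).val * 2 ^ d : ℕ) := by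
      rw [phiMap_succ]
      push_cast
      ring
    rw [hsplit, Nat.floor_add_natCast (by have := phiMap_nonneg m (Fin.tail y); positivity),
      ih (by omega), binaryValue, add_comm]
    rfl

lemma phiMap_mem_dyadic_iff {d m a : ℕ} (h : d ≤ m) (y : Fin m → ZMod 2) :
    ((a : ℝ) / 2 ^ d ≤ phiMap m y ∧ phiMap m y < ((a : ℝ) + 1) / 2 ^ d) ↔
      binaryValue d (y ∘ Fin.castLE h) = a := by
  rw [← floor_two_pow_mul_phiMap h, Nat.floor_eq_iff (by have := phiMap_nonneg m y; positivity),
    div_le_iff₀' (by positivity), lt_div_iff₀' (by positivity)]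

lemma digitsVec_injOn (m : ℕ) : Set.InjOn (digitsVec m) (Set.Iio (2 ^ m)) := by
  intro l hl l' hl' h
  refine Nat.eq_of_testBit_eq fun i => ?_
  by_cases hi : i < m
  · have := congrFun h ⟨i, hi⟩
    simp only [digitsVec] at this
    by_cases h1 : l.testBit i <;> by_cases h2 : l'.testBit i <;> simp_all
  · have hle : 2 ^ m ≤ 2 ^ i := Nat.pow_le_pow_right two_pos (by omega)
    rw [Nat.testBit_lt_two_pow (lt_of_lt_of_le hl hle),
      Nat.testBit_lt_two_pow (lt_of_lt_of_le hl' hle)]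

lemma exists_digitsVec_eq {m : ℕ} (v : Fin m → ZMod 2) : ∃ l < 2 ^ m, digitsVec m l = v := by
  have hbij : Function.Bijective fun l : Fin (2 ^ m) => digitsVec m l := by
    rw [Fintype.bijective_iff_injective_and_card]
    exact ⟨fun l l' h => Fin.ext (digitsVec_injOn m l.2 l'.2 h), by simp⟩
  obtain ⟨l, hl⟩ := hbij.2 v
  exact ⟨l, l.2, hl⟩

/-! ### Digital `(0,m,s)`-nets -/

section JointKernel

variable {K : Type*} [Field K] {m s : ℕ}

def jointKernel (C : Fin s → Matrix (Fin m) (Fin m) K) (d : Fin s → ℕ) :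
    Submodule K (Fin m → K) :=
  ⨅ (j) (k : Fin m) (_ : (k : ℕ) < d j), LinearMap.ker (LinearMap.proj k ∘ₗ (C j).mulVecLin)

lemma mem_jointKernel {C : Fin s → Matrix (Fin m) (Fin m) K} {d : Fin s → ℕ} {v : Fin m → K} :
    v ∈ jointKernel C d ↔ ∀ j (k : Fin m), (k : ℕ) < d j → (C j *ᵥ v) k = 0 := by
  simp [jointKernel, Submodule.mem_iInf]

def leadingRows (C : Fin s → Matrix (Fin m) (Fin m) K) (d : Fin s → ℕ) (hd : ∀ j, d j ≤ m) :
    (Fin m → K) →ₗ[K] ((j : Fin s) → Fin (d j) → K) :=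
  LinearMap.pi fun j => LinearMap.funLeft K K (Fin.castLE (hd j)) ∘ₗ (C j).mulVecLin

lemma leadingRows_apply (C : Fin s → Matrix (Fin m) (Fin m) K) (d : Fin s → ℕ)
    (hd : ∀ j, d j ≤ m) (v : Fin m → K) (j : Fin s) :
    leadingRows C d hd v j = (C j *ᵥ v) ∘ Fin.castLE (hd j) :=
  rfl

lemma ker_leadingRows (C : Fin s → Matrix (Fin m) (Fin m) K) (d : Fin s → ℕ)
    (hd : ∀ j, d j ≤ m) : LinearMap.ker (leadingRows C d hd) = jointKernel C d := by
  ext v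
  simp only [LinearMap.mem_ker, mem_jointKernel, funext_iff]
  exact forall_congr' fun j => ⟨fun h k hk => h ⟨k, hk⟩, fun h k => h _ k.2⟩

lemma jointKernel_ne_bot (C : Fin s → Matrix (Fin m) (Fin m) K) {d : Fin s → ℕ}
    (h : ∑ j, d j < m) : jointKernel C d ≠ ⊥ := by
  have hd j : d j ≤ m := (single_le_sum (fun j _ => Nat.zero_le (d j)) (mem_univ j)).trans h.le
  rw [← ker_leadingRows C d hd]
  exact LinearMap.ker_ne_bot_of_finrank_lt (by simpa [Module.finrank_pi_fintype] using h)

/-- The classical row condition characterising digital `(0,m,s)`-nets. -/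
def LeadingRowsNonsingular (C : Fin s → Matrix (Fin m) (Fin m) K) : Prop :=
  ∀ d : Fin s → ℕ, ∑ j, d j = m → jointKernel C d = ⊥

end JointKernel

lemma countP_digitalNet {m s : ℕ} (C : Fin s → Matrix (Fin m) (Fin m) (ZMod 2))
    (p : (Fin s → ℝ) → Prop) [DecidablePred p] :
    (digitalNet m s C).countP p = #{v | p fun j => phiMap m (C j *ᵥ v)} := by
  rw [digitalNet, Multiset.countP_map]
  change #{l ∈ range (2 ^ m) | p fun j => phiMap m (C j *ᵥ digitsVec m l)} = _
  apply card_nbij (digitsVec m)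
  · intro l hl
    simp only [coe_filter, mem_univ, true_and, Set.mem_ofPred_eq] at hl ⊢
    exact hl.2
  · exact (digitsVec_injOn m).mono fun l hl => by simp_all
  · intro v hv
    obtain ⟨l, hl, rfl⟩ := exists_digitsVec_eq v
    simp_all only [coe_filter, mem_univ, true_and, Set.mem_ofPred_eq]
    exact ⟨l, ⟨mem_range.2 hl, hv⟩, rfl⟩

lemma countP_box_digitalNet {m s : ℕ} (C : Fin s → Matrix (Fin m) (Fin m) (ZMod 2))
    {d : Fin s → ℕ} (hd : ∀ j, d j ≤ m) (a : Fin s → ℕ) [DecidablePred fun x : Fin s → ℝ =>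
      ∀ i, (a i : ℝ) / 2 ^ d i ≤ x i ∧ x i < ((a i : ℝ) + 1) / 2 ^ d i] :
    (digitalNet m s C).countP (fun x => ∀ i,
        (a i : ℝ) / 2 ^ d i ≤ x i ∧ x i < ((a i : ℝ) + 1) / 2 ^ d i) =
      #{v | ∀ j, binaryValue (d j) (leadingRows C d hd v j) = a j} := by
  rw [countP_digitalNet]
  exact congrArg card <| filter_congr fun v _ => by
    simp only [phiMap_mem_dyadic_iff (hd _), leadingRows_apply]

theorem isNet_zero_digitalNet_iff {m s : ℕ} (C : Fin s → Matrix (Fin m) (Fin m) (ZMod 2)) :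
    IsNet 0 m s (digitalNet m s C) ↔ LeadingRowsNonsingular C := by
  refine forall_congr' fun d => ?_
  rw [Nat.sub_zero]
  refine forall_congr' fun hsum => ?_
  have hd j : d j ≤ m := hsum ▸ single_le_sum (fun j _ => Nat.zero_le (d j)) (mem_univ j)
  simp only [countP_box_digitalNet C hd, pow_zero]
  rw [← ker_leadingRows C d hd, LinearMap.ker_eq_bot]
  constructor
  · intro h u v huv
    have := h (fun j => binaryValue (d j) (leadingRows C d hd u j)) fun j => binaryValue_lt _ _
    exact card_le_one.1 this.le u (by simp) v (by simp [huv])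
  · intro hinj a ha
    choose t ht using fun j => exists_binaryValue_eq (ha j)
    have hsurj := (LinearMap.injective_iff_surjective_of_finrank_eq_finrank
      (by simp [Module.finrank_pi_fintype, hsum])).1 hinj
    obtain ⟨v, hv⟩ := hsurj t
    refine card_eq_one.2 ⟨v, ?_⟩
    ext w
    simp only [mem_filter, mem_univ, true_and, mem_singleton, ← ht,
      (binaryValue_injective _).eq_iff, ← funext_iff, ← hv, hinj.eq_iff]

lemma mem_jointKernel_three {K : Type*} [Field K] {m : ℕ} {A₀ A₁ A₂ : Matrix (Fin m) (Fin m) K}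
    {a b c : ℕ} {v : Fin m → K} :
    v ∈ jointKernel ![A₀, A₁, A₂] ![a, b, c] ↔ (∀ k : Fin m, (k : ℕ) < a → (A₀ *ᵥ v) k = 0) ∧
      (∀ k : Fin m, (k : ℕ) < b → (A₁ *ᵥ v) k = 0) ∧
        ∀ k : Fin m, (k : ℕ) < c → (A₂ *ᵥ v) k = 0 := by
  simp [mem_jointKernel, Fin.forall_fin_succ]

lemma leadingRowsNonsingular_three_iff {K : Type*} [Field K] {m : ℕ}
    {A₀ A₁ A₂ : Matrix (Fin m) (Fin m) K} : LeadingRowsNonsingular ![A₀, A₁, A₂] ↔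
      ∀ a b c, a + b + c = m → jointKernel ![A₀, A₁, A₂] ![a, b, c] = ⊥ := by
  refine ⟨fun h a b c habc => h _ (by simp [Fin.sum_univ_three, habc]), fun h d hd => ?_⟩
  convert h (d 0) (d 1) (d 2) (by simpa [Fin.sum_univ_three] using hd)
  ext i
  fin_cases i <;> rfl

/-! ### Lower-triangular conjugation -/

section LowerTri

variable {m : ℕ} {L : Matrix (Fin m) (Fin m) (ZMod 2)}

lemma IsLowerTri.isLowerTriangular (hL : IsLowerTri L) : L.IsLowerTriangular :=
  fun i j h => hL i j h

lemma IsLowerTri.inv (hL : IsLowerTri L) (hU : IsUnit L) : IsLowerTri L⁻¹ := by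
  have := L.invertibleOfIsUnitDet ((isUnit_iff_isUnit_det L).1 hU)
  exact fun i j hij => blockTriangular_inv_of_blockTriangular hL.isLowerTriangular hij

lemma IsLowerTri.mulVec_apply_eq_zero (hL : IsLowerTri L) {a : ℕ} {v : Fin m → ZMod 2}
    (hv : ∀ k : Fin m, (k : ℕ) < a → v k = 0) (k : Fin m) (hk : (k : ℕ) < a) :
    (L *ᵥ v) k = 0 := by
  simp only [mulVec, dotProduct]
  refine sum_eq_zero fun j _ => ?_
  rcases lt_or_ge k j with hkj | hjk
  · rw [hL k j hkj, zero_mul]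
  · rw [hv j (lt_of_le_of_lt (Fin.le_def.1 hjk) hk), mul_zero]

lemma LeadingRowsNonsingular.conj {s : ℕ} {C : Fin s → Matrix (Fin m) (Fin m) (ZMod 2)}
    (h : LeadingRowsNonsingular C) (hL : IsLowerTri L) (hU : IsUnit L) :
    LeadingRowsNonsingular fun j => L * C j * L⁻¹ := by
  have hdet := (isUnit_iff_isUnit_det L).1 hU
  intro d hd
  rw [Submodule.eq_bot_iff]
  intro v hv
  have hw : L⁻¹ *ᵥ v ∈ jointKernel C d := mem_jointKernel.2 fun j k hk => by
    have := (hL.inv hU).mulVec_apply_eq_zero (mem_jointKernel.1 hv j) k hk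
    rwa [mulVec_mulVec, ← mul_assoc, ← mul_assoc, nonsing_inv_mul _ hdet, one_mul,
      ← mulVec_mulVec] at this
  rw [h d hd, Submodule.mem_bot] at hw
  simpa [mulVec_mulVec, mul_nonsing_inv _ hdet] using congrArg (L *ᵥ ·) hw

end LowerTri

/-! ### The polynomial model of `P_m` and `J_m` -/

lemma reflect_X_add_one_pow {R : Type*} [CommSemiring R] {k N : ℕ} (h : k ≤ N) :
    reflect N ((X + 1 : R[X]) ^ k) = X ^ (N - k) * (X + 1) ^ k := by
  have hdeg : ((X + 1 : R[X]) ^ k).natDegree ≤ k := by compute_degree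
  have hself : reflect k ((X + 1 : R[X]) ^ k) = (X + 1) ^ k := by
    ext i
    rw [coeff_reflect, coeff_X_add_one_pow, coeff_X_add_one_pow]
    rcases le_or_gt i k with hi | hi
    · rw [revAt_le hi, Nat.choose_symm hi]
    · rw [revAt_eq_self_of_lt hi]
  obtain ⟨j, rfl⟩ := Nat.exists_eq_add_of_le h
  conv_lhs => rw [← mul_one ((X + 1 : R[X]) ^ k)]
  rw [reflect_mul _ _ hdeg (natDegree_one.trans_le j.zero_le), hself, reflect_one, mul_comm,
    Nat.add_sub_cancel_left]

section CharTwo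

variable {R : Type*} [CommSemiring R] [CharP R 2]

lemma taylor_one_X_add_one : taylor (1 : R) (X + 1) = X := by
  rw [map_add, taylor_X, taylor_one, C_1, add_assoc, CharTwo.add_self_eq_zero, add_zero]

lemma taylor_one_taylor_one (p : R[X]) : taylor 1 (taylor 1 p) = p := by
  rw [taylor_taylor, CharTwo.add_self_eq_zero, taylor_zero]

end CharTwo

section OfFn

variable {R : Type*} [Semiring R] [DecidableEq R] {m : ℕ}

lemma X_pow_dvd_ofFn_iff {k : ℕ} {v : Fin m → R} :
    X ^ k ∣ ofFn m v ↔ ∀ i : Fin m, (i : ℕ) < k → v i = 0 := by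
  rw [X_pow_dvd_iff]
  refine ⟨fun h i hi => by simpa using h i hi, fun h n hn => ?_⟩
  by_cases hnm : n < m
  · rw [ofFn_coeff_eq_val_of_lt _ hnm, h _ hn]
  · exact ofFn_coeff_eq_zero_of_ge _ (not_lt.1 hnm)

lemma degree_ofFn_lt_iff {n : ℕ} {v : Fin m → R} :
    (ofFn m v).degree < n ↔ ∀ i : Fin m, n ≤ i → v i = 0 := by
  rw [degree_lt_iff_coeff_zero]
  refine ⟨fun h i hi => by simpa using h i hi, fun h k hk => ?_⟩
  by_cases hkm : k < m
  · rw [ofFn_coeff_eq_val_of_lt _ hkm, h _ hk]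
  · exact ofFn_coeff_eq_zero_of_ge _ (not_lt.1 hkm)

lemma ofFn_single (t : Fin m) : ofFn m (Pi.single t (1 : R)) = X ^ (t : ℕ) := by
  simp [ofFn_eq_sum_monomial, Pi.single_apply, apply_ite, X_pow_eq_monomial]

end OfFn

section PascalReversal

variable {m : ℕ}

lemma Jmat_mulVec_apply (v : Fin m → ZMod 2) (k : Fin m) : (Jmat m *ᵥ v) k = v k.rev := by
  rw [mulVec, dotProduct, sum_eq_single k.rev]
  · simp [Jmat, Fin.val_rev, show (k : ℕ) + (m - (k + 1)) = m - 1 by omega]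
  · intro j _ hj
    simp only [Jmat, of_apply, ite_mul, one_mul, zero_mul, ite_eq_right_iff]
    exact fun h => absurd (Fin.ext (by rw [Fin.val_rev]; omega)) hj
  · simp

lemma forall_lt_Jmat_mulVec_eq_zero_iff {k : ℕ} (v : Fin m → ZMod 2) :
    (∀ i : Fin m, (i : ℕ) < k → (Jmat m *ᵥ v) i = 0) ↔ ∀ i : Fin m, m - k ≤ i → v i = 0 := by
  simp only [Jmat_mulVec_apply]
  refine ⟨fun h i hi => ?_, fun h i hi => h _ (by rw [Fin.val_rev]; omega)⟩
  simpa using h i.rev (by rw [Fin.val_rev]; omega)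

lemma ofFn_Jmat_mulVec (v : Fin m → ZMod 2) :
    ofFn m (Jmat m *ᵥ v) = reflect (m - 1) (ofFn m v) := by
  ext n
  rw [coeff_reflect]
  by_cases hn : n < m
  · rw [ofFn_coeff_eq_val_of_lt _ hn, Jmat_mulVec_apply, revAt_le (by omega),
      ofFn_coeff_eq_val_of_lt _ (by omega)]
    congr 1
    ext
    simp only [Fin.val_rev]
    omega
  · rw [ofFn_coeff_eq_zero_of_ge _ (by omega), ofFn_coeff_eq_zero_of_ge]
    rcases le_or_gt n (m - 1) with h | h
    · rw [revAt_le h]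
      omega
    · rw [revAt_eq_self_of_lt h]
      omega

lemma ofFn_Pmat_mulVec (v : Fin m → ZMod 2) : ofFn m (Pmat m *ᵥ v) = taylor 1 (ofFn m v) := by
  ext n
  have hcoeff : (taylor 1 (ofFn m v)).coeff n = ∑ j, v j * (j : ℕ).choose n := by
    simp [taylor_apply, ofFn_eq_sum_monomial, ← C_mul_X_pow_eq_monomial, finsetSum_coeff,
      coeff_X_add_one_pow]
  rw [hcoeff]
  by_cases hn : n < m
  · simp [ofFn_coeff_eq_val_of_lt _ hn, mulVec, dotProduct, Pmat, mul_comm]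
  · rw [ofFn_coeff_eq_zero_of_ge _ (not_lt.1 hn)]
    refine (sum_eq_zero fun j _ => ?_).symm
    rw [Nat.choose_eq_zero_of_lt (by omega), Nat.cast_zero, mul_zero]

lemma Pmat_mul_Pmat : Pmat m * Pmat m = 1 := by
  refine ext_iff_mulVec.2 fun v => injective_ofFn m ?_
  rw [← mulVec_mulVec, ofFn_Pmat_mulVec, ofFn_Pmat_mulVec, taylor_one_taylor_one, one_mulVec]

lemma Jmat_mul_Jmat : Jmat m * Jmat m = 1 := by
  refine ext_iff_mulVec.2 fun v => injective_ofFn m ?_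
  rw [← mulVec_mulVec, ofFn_Jmat_mulVec, ofFn_Jmat_mulVec, reflect_reflect, one_mulVec]

lemma ofFn_Pmat_mul_Jmat_mulVec (v : Fin m → ZMod 2) :
    ofFn m ((Pmat m * Jmat m) *ᵥ v) = taylor 1 (reflect (m - 1) (ofFn m v)) := by
  rw [← mulVec_mulVec, ofFn_Pmat_mulVec, ofFn_Jmat_mulVec]

lemma ofFn_Pmat_mul_Jmat_mulVec_single (t : Fin m) :
    ofFn m ((Pmat m * Jmat m) *ᵥ Pi.single t 1) = (X + 1) ^ (m - 1 - t) := by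
  rw [ofFn_Pmat_mul_Jmat_mulVec, ofFn_single, reflect_monomial, revAt_le (by omega),
    taylor_X_pow, C_1]

lemma ofFn_Jmat_mul_Pmat_mulVec_single (t : Fin m) :
    ofFn m ((Jmat m * Pmat m) *ᵥ Pi.single t 1) = X ^ (m - 1 - t) * (X + 1) ^ (t : ℕ) := by
  rw [← mulVec_mulVec, ofFn_Jmat_mulVec, ofFn_Pmat_mulVec, ofFn_single, taylor_X_pow, C_1,
    reflect_X_add_one_pow (by omega)]

lemma Pmat_mul_Jmat_sq : (Pmat m * Jmat m) ^ 2 = Jmat m * Pmat m := by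
  refine ext_of_mulVec_single fun t => injective_ofFn m ?_
  rw [sq, ← mulVec_mulVec, ofFn_Jmat_mul_Pmat_mulVec_single, ofFn_Pmat_mul_Jmat_mulVec,
    ofFn_Pmat_mul_Jmat_mulVec_single, reflect_X_add_one_pow (by omega), taylor_mul, taylor_X_pow,
    taylor_pow, taylor_one_X_add_one, C_1, Nat.sub_sub_self (by omega), mul_comm]

theorem leadingRowsNonsingular_Pmat_mul_Jmat :
    LeadingRowsNonsingular ![1, Pmat m * Jmat m, (Pmat m * Jmat m) ^ 2] := by
  refine leadingRowsNonsingular_three_iff.2 fun a b c habc => ?_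
  rw [Submodule.eq_bot_iff]
  intro v hv
  obtain ⟨h0, h1, h2⟩ := mem_jointKernel_three.1 hv
  set u := Jmat m *ᵥ v
  have hvu : v = Jmat m *ᵥ u := by rw [mulVec_mulVec, Jmat_mul_Jmat, one_mulVec]
  have hdeg : (ofFn m u).degree < ↑(c + b) := by
    rw [show c + b = m - a by omega, degree_ofFn_lt_iff, ← forall_lt_Jmat_mulVec_eq_zero_iff,
      ← hvu]
    simpa using h0
  have hdvd₁ : (X - C 1) ^ b ∣ ofFn m u := by
    rw [X_sub_C_pow_dvd_iff, ← taylor_apply, ← ofFn_Pmat_mulVec, X_pow_dvd_ofFn_iff]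
    rwa [← mulVec_mulVec] at h1
  have hdvd₂ : X ^ c ∣ ofFn m u := by
    -- `(P J)² = J P`, and `J` turns vanishing leading coordinates into a degree bound,
    -- which `P` preserves.
    rw [Pmat_mul_Jmat_sq, ← mulVec_mulVec, hvu, forall_lt_Jmat_mulVec_eq_zero_iff,
      ← degree_ofFn_lt_iff, ofFn_Pmat_mulVec, degree_taylor, degree_ofFn_lt_iff,
      ← forall_lt_Jmat_mulVec_eq_zero_iff, ← hvu] at h2
    rwa [X_pow_dvd_ofFn_iff]
  have hcop : IsCoprime (X : (ZMod 2)[X]) (X - C 1) := ⟨1, -1, by rw [C_1]; ring⟩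
  have hdeg' : (X ^ c * (X - C 1) ^ b : (ZMod 2)[X]).degree = ↑(c + b) := by compute_degree!
  have hu : ofFn m u = 0 :=
    eq_zero_of_dvd_of_degree_lt (hcop.pow.mul_dvd hdvd₂ hdvd₁) (hdeg.trans_eq hdeg'.symm)
  rw [hvu, injective_ofFn m (hu.trans (map_zero _).symm), mulVec_zero]

end PascalReversal

/-! ### The flag of a matrix satisfying the net condition -/

section Flag

variable {m : ℕ} {B : Matrix (Fin m) (Fin m) (ZMod 2)} {a b c : ℕ} {v : Fin m → ZMod 2}

def flagKernel (B : Matrix (Fin m) (Fin m) (ZMod 2)) (a b c : ℕ) :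
    Submodule (ZMod 2) (Fin m → ZMod 2) :=
  jointKernel ![1, B, B ^ 2] ![a, b, c]

lemma mem_flagKernel : v ∈ flagKernel B a b c ↔ (∀ k : Fin m, (k : ℕ) < a → v k = 0) ∧
    (∀ k : Fin m, (k : ℕ) < b → (B *ᵥ v) k = 0) ∧
      ∀ k : Fin m, (k : ℕ) < c → (B ^ 2 *ᵥ v) k = 0 := by
  rw [flagKernel, mem_jointKernel_three, one_mulVec]

lemma flagKernel_anti {a' b' c' : ℕ} (ha : a ≤ a') (hb : b ≤ b') (hc : c ≤ c') :
    flagKernel B a' b' c' ≤ flagKernel B a b c := fun v hv => by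
  obtain ⟨h1, h2, h3⟩ := mem_flagKernel.1 hv
  exact mem_flagKernel.2 ⟨fun k hk => h1 k (by omega), fun k hk => h2 k (by omega),
    fun k hk => h3 k (by omega)⟩

lemma mem_flagKernel_succ (hv : v ∈ flagKernel B a b c) (ha : a < m) (hva : v ⟨a, ha⟩ = 0) :
    v ∈ flagKernel B (a + 1) b c := by
  obtain ⟨h1, h2, h3⟩ := mem_flagKernel.1 hv
  refine mem_flagKernel.2 ⟨fun k hk => ?_, h2, h3⟩
  rcases Nat.lt_succ_iff_lt_or_eq.1 hk with hk | hk
  · exact h1 k hk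
  · rwa [show k = ⟨a, ha⟩ from Fin.ext hk]

lemma eq_zero_of_mem_flagKernel (hB : LeadingRowsNonsingular ![1, B, B ^ 2])
    (h : a + b + c = m) (hv : v ∈ flagKernel B a b c) : v = 0 := by
  rwa [flagKernel, leadingRowsNonsingular_three_iff.1 hB a b c h, Submodule.mem_bot] at hv

/-- When `a + b + c + 1 = m` the space `flagKernel B a b c` is a line, and this is its nonzero
vector; for `B = P_m J_m` it is the coefficient vector of `X ^ a * (X + 1) ^ b`. -/
noncomputable def flagVec (B : Matrix (Fin m) (Fin m) (ZMod 2)) (a b c : ℕ) : Fin m → ZMod 2 :=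
  open Classical in if h : ∃ v ∈ flagKernel B a b c, v ≠ 0 then h.choose else 0

lemma flagVec_mem (h : a + b + c < m) :
    flagVec B a b c ∈ flagKernel B a b c ∧ flagVec B a b c ≠ 0 := by
  have hex : ∃ v ∈ flagKernel B a b c, v ≠ 0 := Submodule.exists_mem_ne_zero_of_ne_bot
    (jointKernel_ne_bot _ (by simpa [Fin.sum_univ_three] using h))
  rw [flagVec, dif_pos hex]
  exact hex.choose_spec

lemma apply_eq_one_of_mem_flagKernel (hB : LeadingRowsNonsingular ![1, B, B ^ 2])
    (h : a + b + c + 1 = m) (hv : v ∈ flagKernel B a b c) (hv0 : v ≠ 0) :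
    v ⟨a, by omega⟩ = 1 := by
  by_contra hva
  have hva : v ⟨a, by omega⟩ = 0 := by
    revert hva
    generalize v _ = x
    revert x
    decide
  exact hv0 (eq_zero_of_mem_flagKernel hB (by omega) (mem_flagKernel_succ hv _ hva))

lemma eq_flagVec (hB : LeadingRowsNonsingular ![1, B, B ^ 2]) (h : a + b + c + 1 = m)
    (hv : v ∈ flagKernel B a b c) (hv0 : v ≠ 0) : v = flagVec B a b c := by
  obtain ⟨hw, hw0⟩ := flagVec_mem (B := B) (a := a) (b := b) (c := c) (by omega)
  have hsum := mem_flagKernel_succ (add_mem hv hw) (by omega) (by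
    rw [Pi.add_apply, apply_eq_one_of_mem_flagKernel hB h hv hv0,
      apply_eq_one_of_mem_flagKernel hB h hw hw0]
    rfl)
  rw [← sub_eq_zero, ZModModule.sub_eq_add]
  exact eq_zero_of_mem_flagKernel hB (by omega) hsum

lemma flagVec_succ_mid (hB : LeadingRowsNonsingular ![1, B, B ^ 2]) (h : a + b + c + 2 = m) :
    flagVec B a (b + 1) c = flagVec B (a + 1) b c + flagVec B a b (c + 1) := by
  obtain ⟨hy, hy0⟩ := flagVec_mem (B := B) (a := a) (b := b + 1) (c := c) (by omega)
  obtain ⟨hz, hz0⟩ := flagVec_mem (B := B) (a := a) (b := b) (c := c + 1) (by omega)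
  have hyz : flagVec B a (b + 1) c + flagVec B a b (c + 1) ∈ flagKernel B (a + 1) b c := by
    refine mem_flagKernel_succ (add_mem (flagKernel_anti le_rfl (by omega) le_rfl hy)
      (flagKernel_anti le_rfl le_rfl (by omega) hz)) (by omega) ?_
    rw [Pi.add_apply, apply_eq_one_of_mem_flagKernel hB (by omega) hy hy0,
      apply_eq_one_of_mem_flagKernel hB (by omega) hz hz0]
    rfl
  have hyz0 : flagVec B a (b + 1) c + flagVec B a b (c + 1) ≠ 0 := by
    rw [← ZModModule.sub_eq_add, sub_ne_zero]
    intro heq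
    refine hy0 (eq_zero_of_mem_flagKernel hB (a := a) (b := b + 1) (c := c + 1) (by omega) ?_)
    obtain ⟨h1, h2, -⟩ := mem_flagKernel.1 hy
    exact mem_flagKernel.2 ⟨h1, h2, (mem_flagKernel.1 (heq ▸ hz)).2.2⟩
  rw [← eq_flagVec hB (by omega) hyz hyz0, add_assoc, ZModModule.add_self, add_zero]

lemma mulVec_flagVec (hB : LeadingRowsNonsingular ![1, B, B ^ 2]) (h : b + c + 1 = m) :
    B *ᵥ flagVec B 0 b c = flagVec B b c 0 := by
  obtain ⟨hv, hv0⟩ := flagVec_mem (B := B) (a := 0) (b := b) (c := c) (by omega)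
  obtain ⟨-, h2, h3⟩ := mem_flagKernel.1 hv
  refine eq_flagVec hB (by omega) (mem_flagKernel.2 ⟨h2, fun k hk => ?_, by simp⟩) fun hB0 => ?_
  · rw [mulVec_mulVec, ← sq]
    exact h3 k hk
  · refine hv0 (eq_zero_of_mem_flagKernel hB (a := 0) (b := m) (c := 0) (by omega) ?_)
    exact mem_flagKernel.2 ⟨by simp, by simp [hB0], by simp⟩

noncomputable def flagMatrix (B : Matrix (Fin m) (Fin m) (ZMod 2)) :
    Matrix (Fin m) (Fin m) (ZMod 2) :=
  of fun i t => flagVec B t 0 (m - 1 - t) i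

lemma flagMatrix_isLowerTri : IsLowerTri (flagMatrix B) := fun i t hit =>
  (mem_flagKernel.1 (flagVec_mem (by omega)).1).1 i hit

lemma flagMatrix_apply_self (hB : LeadingRowsNonsingular ![1, B, B ^ 2]) (t : Fin m) :
    flagMatrix B t t = 1 := by
  change flagVec B t 0 (m - 1 - t) t = 1
  obtain ⟨hv, hv0⟩ := flagVec_mem (B := B) (a := t) (b := 0) (c := m - 1 - t) (by omega)
  exact apply_eq_one_of_mem_flagKernel hB (by omega) hv hv0

lemma isUnit_flagMatrix (hB : LeadingRowsNonsingular ![1, B, B ^ 2]) :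
    IsUnit (flagMatrix B) := by
  rw [isUnit_iff_isUnit_det, det_of_isLowerTriangular _ flagMatrix_isLowerTri.isLowerTriangular]
  simp [flagMatrix_apply_self hB]

lemma flagVec_eq_mulVec (hB : LeadingRowsNonsingular ![1, B, B ^ 2]) (b : ℕ) :
    ∀ a c, a + b + c + 1 = m →
      flagVec B a b c = flagMatrix B *ᵥ toFn m (X ^ a * (X + 1) ^ b) := by
  induction b with
  | zero =>
    intro a c h
    obtain rfl : c = m - 1 - a := by omega
    rw [pow_zero, mul_one, ← ofFn_single (R := ZMod 2) (⟨a, by omega⟩ : Fin m),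
      toFn_comp_ofFn_eq_id, mulVec_single_one]
    rfl
  | succ b ih =>
    intro a c h
    rw [flagVec_succ_mid hB (by omega), ih (a + 1) c (by omega), ih a (c + 1) (by omega),
      ← mulVec_add, ← map_add]
    congr 2
    ring

lemma mul_flagMatrix_mul_Pmat_mul_Jmat (hB : LeadingRowsNonsingular ![1, B, B ^ 2]) :
    B * flagMatrix B * (Pmat m * Jmat m) = flagMatrix B * (Jmat m * Pmat m) := by
  refine ext_of_mulVec_single fun t => ?_
  have hcol := flagVec_eq_mulVec hB (m - 1 - t) 0 t (by omega)
  rw [pow_zero, one_mul, ← ofFn_Pmat_mul_Jmat_mulVec_single, toFn_comp_ofFn_eq_id] at hcol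
  have hcol' := flagVec_eq_mulVec hB t (m - 1 - t) 0 (by omega)
  rw [← ofFn_Jmat_mul_Pmat_mulVec_single, toFn_comp_ofFn_eq_id] at hcol'
  rw [← mulVec_mulVec, ← mulVec_mulVec, ← hcol, mulVec_flagVec hB (by omega), hcol',
    mulVec_mulVec]

theorem exists_lowerTri_eq_conj (hB : LeadingRowsNonsingular ![1, B, B ^ 2]) :
    ∃ L, IsLowerTri L ∧ IsUnit L ∧ B = L * Pmat m * Jmat m * L⁻¹ := by
  have hQR : Pmat m * Jmat m * (Jmat m * Pmat m) = 1 := by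
    rw [mul_assoc, ← mul_assoc (Jmat m), Jmat_mul_Jmat, one_mul, Pmat_mul_Pmat]
  have hBLQ : B * flagMatrix B * (Pmat m * Jmat m) =
      flagMatrix B * (Pmat m * Jmat m) * (Pmat m * Jmat m) := by
    rw [mul_flagMatrix_mul_Pmat_mul_Jmat hB, ← Pmat_mul_Jmat_sq, sq, ← mul_assoc]
  have hBL : B * flagMatrix B = flagMatrix B * (Pmat m * Jmat m) := by
    simpa only [mul_assoc, hQR, mul_one] using congrArg (· * (Jmat m * Pmat m)) hBLQ
  refine ⟨flagMatrix B, flagMatrix_isLowerTri, isUnit_flagMatrix hB, ?_⟩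
  rw [mul_assoc (flagMatrix B), ← hBL, mul_assoc,
    mul_nonsing_inv _ ((isUnit_iff_isUnit_det _).1 (isUnit_flagMatrix hB)), mul_one]

end Flag

theorem stmt0_general (m : ℕ) (B : Matrix (Fin m) (Fin m) (ZMod 2)) :
    IsNet 0 m 3 (digitalNet m 3 ![1, B, B ^ 2]) ↔
      ∃ L : Matrix (Fin m) (Fin m) (ZMod 2),
        IsLowerTri L ∧ IsUnit L ∧ B = L * Pmat m * Jmat m * L⁻¹ := by
  rw [isNet_zero_digitalNet_iff]
  refine ⟨exists_lowerTri_eq_conj, ?_⟩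
  rintro ⟨L, hL, hU, rfl⟩
  have := L.invertibleOfIsUnitDet ((isUnit_iff_isUnit_det L).1 hU)
  convert leadingRowsNonsingular_Pmat_mul_Jmat.conj hL hU using 1
  ext1 j
  fin_cases j <;> simp [sq, mul_assoc]

theorem stmt0 (m : ℕ) (hm : 1 ≤ m) (B : Matrix (Fin m) (Fin m) (ZMod 2)) :
    IsNet 0 m 3 (digitalNet m 3 ![1, B, B ^ 2]) ↔
      ∃ L : Matrix (Fin m) (Fin m) (ZMod 2),
        IsLowerTri L ∧ IsUnit L ∧ B = L * Pmat m * Jmat m * L⁻¹ :=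
  stmt0_general m B
end

section
/- Let m ≥ 1, 0 ≤ t ≤ m, and let C_1,…,C_s be m×m matrices over F₂, and denote by c_i^j the j-th row of C_i. Assume that for all choices of nonnegative integers d_1,…,d_s with d_1+…+d_s = m−t, the m−t vectors {c_i^j : 1 ≤ i ≤ s, 1 ≤ j ≤ d_i} are linearly independent over F₂. Then the digital net generated by (C_1,…,C_s) is a (t,m,s)-net over F₂. -/
open Matrix

/-! Fix an elementary interval with corners `a i / 2 ^ d i`. Since `φ` reads a digit vector as a
binary fraction, the point generated by `b ∈ F₂^m` lies in it iff for every `i` the first `d i`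
digits of `C i *ᵥ b` spell out `a i` in binary, i.e. iff `M *ᵥ b = w`, where `M` stacks the rows
`c_i^j` with `j < d i` and `w` collects the digits of the `a i`. The `m - t` rows of `M` are
independent, so `b ↦ M *ᵥ b` is onto `F₂^(m-t)` and each of its fibres has `2 ^ t` elements; and
`l ↦ digitsVec m l` enumerates `F₂^m` exactly once as `l` runs over `[0, 2 ^ m)`. -/

-- `ZMod 2` is definitionally `Fin 2`.
def littleEndianEquiv (m : ℕ) : (Fin m → ZMod 2) ≃ Fin (2 ^ m) := finFunctionFinEquiv

def bigEndianEquiv (m : ℕ) : (Fin m → ZMod 2) ≃ Fin (2 ^ m) :=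
  (Equiv.arrowCongr Fin.revPerm (Equiv.refl _)).trans (littleEndianEquiv m)

lemma val_bigEndianEquiv {m : ℕ} (y : Fin m → ZMod 2) :
    (bigEndianEquiv m y : ℕ) = ∑ j, (y j).val * 2 ^ (m - 1 - j) := by
  refine Fintype.sum_equiv Fin.revPerm _ _ fun i => ?_
  show (y i.rev).val * 2 ^ (i : ℕ) = _
  rw [Fin.revPerm_apply, Fin.val_rev]; congr 2; omega

lemma digitsVec_eq {m l : ℕ} (hl : l < 2 ^ m) :
    digitsVec m l = (littleEndianEquiv m).symm ⟨l, hl⟩ := by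
  funext k
  apply ZMod.val_injective
  show _ = l / 2 ^ (k : ℕ) % 2
  rw [digitsVec, Nat.testBit_eq_decide_div_mod_eq]
  rcases Nat.mod_two_eq_zero_or_one (l / 2 ^ (k : ℕ)) with h | h <;> simp [h, ZMod.val_one]

lemma val_bigEndianEquiv_symm {m : ℕ} (n : Fin (2 ^ m)) (j : Fin m) :
    ((bigEndianEquiv m).symm n j).val = n / 2 ^ (m - 1 - j) % 2 := by
  show (n : ℕ) / 2 ^ (j.rev : ℕ) % 2 = _
  rw [Fin.val_rev]; congr 3; omega

lemma val_bigEndianEquiv_castLE {d m : ℕ} (hd : d ≤ m) (y : Fin m → ZMod 2) :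
    (bigEndianEquiv d (fun j => y (Fin.castLE hd j)) : ℕ) =
      bigEndianEquiv m y / 2 ^ (m - d) := by
  let N := bigEndianEquiv m y
  have hlt : (N : ℕ) / 2 ^ (m - d) < 2 ^ d := by
    rw [Nat.div_lt_iff_lt_mul (by positivity), ← pow_add, Nat.add_sub_cancel' hd]
    exact N.isLt
  suffices (fun j => y (Fin.castLE hd j)) = (bigEndianEquiv d).symm ⟨_, hlt⟩ by
    rw [this, Equiv.apply_symm_apply]
  funext j
  apply ZMod.val_injective
  rw [val_bigEndianEquiv_symm, ← (bigEndianEquiv m).symm_apply_apply y, val_bigEndianEquiv_symm,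
    Nat.div_div_eq_div_mul, ← pow_add, Fin.val_castLE]
  congr 3
  omega

lemma mem_Ico_div_two_pow_iff {x : ℝ} (hx : 0 ≤ x) (a d : ℕ) :
    ((a : ℝ) / 2 ^ d ≤ x ∧ x < ((a : ℝ) + 1) / 2 ^ d) ↔ ⌊x * 2 ^ d⌋₊ = a := by
  rw [Nat.floor_eq_iff (by positivity), div_le_iff₀ (by positivity), lt_div_iff₀ (by positivity)]

lemma phiMap_eq_div {m : ℕ} (y : Fin m → ZMod 2) :
    phiMap m y = (bigEndianEquiv m y : ℕ) / 2 ^ m := by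
  rw [val_bigEndianEquiv, phiMap, Nat.cast_sum, Finset.sum_div]
  refine Finset.sum_congr rfl fun k _ => ?_
  have h : (2 : ℝ) ^ m = 2 ^ (m - 1 - (k : ℕ)) * 2 ^ ((k : ℕ) + 1) := by
    rw [← pow_add]; congr 1; omega
  rw [h]
  push_cast
  field_simp

lemma floor_phiMap_mul_two_pow {d m : ℕ} (hd : d ≤ m) (y : Fin m → ZMod 2) :
    ⌊phiMap m y * 2 ^ d⌋₊ = bigEndianEquiv d (fun j => y (Fin.castLE hd j)) := by
  have h : phiMap m y * 2 ^ d = ((bigEndianEquiv m y : ℕ) : ℝ) / ((2 ^ (m - d) : ℕ) : ℝ) := by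
    have h2m : (2 : ℝ) ^ m = 2 ^ (m - d) * 2 ^ d := by rw [← pow_add, Nat.sub_add_cancel hd]
    rw [phiMap_eq_div, h2m]
    push_cast
    field_simp
  rw [h, Nat.floor_div_eq_div, val_bigEndianEquiv_castLE]

lemma phiMap_mem_Ico_iff {d m a : ℕ} (hd : d ≤ m) (ha : a < 2 ^ d) (y : Fin m → ZMod 2) :
    ((a : ℝ) / 2 ^ d ≤ phiMap m y ∧ phiMap m y < ((a : ℝ) + 1) / 2 ^ d) ↔
      (fun j => y (Fin.castLE hd j)) = (bigEndianEquiv d).symm ⟨a, ha⟩ := by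
  rw [mem_Ico_div_two_pow_iff (by rw [phiMap_eq_div]; positivity), floor_phiMap_mul_two_pow hd,
    Equiv.eq_symm_apply, Fin.ext_iff]

lemma map_digitsVec_range (m : ℕ) :
    (Multiset.range (2 ^ m)).map (digitsVec m) = (Finset.univ : Finset (Fin m → ZMod 2)).val := by
  rw [← Finset.range_val, ← Finset.image_val_of_injOn]
  · congr
    refine Finset.eq_univ_of_forall fun b => Finset.mem_image.2 ⟨littleEndianEquiv m b,
      Finset.mem_range.2 (Fin.isLt _), ?_⟩
    rw [digitsVec_eq (Fin.isLt _), Fin.eta, Equiv.symm_apply_apply]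
  · intro l hl l' hl' h
    rw [Finset.mem_coe, Finset.mem_range] at hl hl'
    rw [digitsVec_eq hl, digitsVec_eq hl'] at h
    exact Fin.mk.inj ((littleEndianEquiv m).symm.injective h)

lemma LinearMap.natCard_fiber_of_surjective {K V W : Type*} [Field K] [AddCommGroup V]
    [Module K V] [AddCommGroup W] [Module K W] [FiniteDimensional K V] {f : V →ₗ[K] W}
    (hf : Function.Surjective f) (w : W) :
    Nat.card {v // f v = w} = Nat.card K ^ (Module.finrank K V - Module.finrank K W) := by
  obtain ⟨v₀, rfl⟩ := hf w
  let e : {v // f v = f v₀} ≃ LinearMap.ker f :=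
    { toFun := fun v => ⟨v - v₀, by simp [v.2]⟩
      invFun := fun k => ⟨k + v₀, by simp⟩
      left_inv := fun v => by simp
      right_inv := fun k => by simp }
  have hrank := f.finrank_range_add_finrank_ker
  rw [LinearMap.range_eq_top.2 hf, finrank_top] at hrank
  rw [Nat.card_congr e, Module.natCard_eq_pow_finrank (K := K)]
  congr 1
  omega

lemma Matrix.mulVecLin_surjective_of_linearIndependent_row {ι n K : Type*} [Field K]
    [Fintype ι] [Fintype n] {M : Matrix ι n K} (hM : LinearIndependent K M.row) :
    Function.Surjective M.mulVecLin := by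
  refine LinearMap.range_eq_top.1 (Submodule.eq_top_of_finrank_eq ?_)
  rw [← Matrix.rank, hM.rank_matrix, Module.finrank_fintype_fun_eq_card]

lemma card_subtype_val_lt_eq_sum {ι : Type*} [Fintype ι] {m : ℕ} (d : ι → ℕ)
    (hd : ∀ i, d i ≤ m) :
    Fintype.card {p : ι × Fin m // p.2.val < d p.1} = ∑ i, d i := by
  let e : {p : ι × Fin m // p.2.val < d p.1} ≃ Σ i, Fin (d i) :=
    { toFun := fun p => ⟨p.1.1, p.1.2, p.2⟩
      invFun := fun q => ⟨(q.1, ⟨q.2, q.2.isLt.trans_le (hd q.1)⟩), q.2.isLt⟩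
      left_inv := fun _ => rfl
      right_inv := fun _ => rfl }
  simp [Fintype.card_congr e]

lemma digitalNet_eq_map_univ (m s : ℕ) (C : Fin s → Matrix (Fin m) (Fin m) (ZMod 2)) :
    digitalNet m s C = Finset.univ.val.map fun b j => phiMap m (C j *ᵥ b) := by
  rw [digitalNet, ← map_digitsVec_range, Multiset.map_map]
  rfl

theorem stmt2_general (m t s : ℕ) (ht : t ≤ m)
    (C : Fin s → Matrix (Fin m) (Fin m) (ZMod 2))
    (h : ∀ d : Fin s → ℕ, (∑ i, d i) = m - t →
      LinearIndependent (ZMod 2)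
        (fun p : {p : Fin s × Fin m // p.2.val < d p.1} => C p.1.1 p.1.2)) :
    IsNet t m s (digitalNet m s C) := by
  intro d hd a ha
  have hdm (i : Fin s) : d i ≤ m := (Finset.single_le_sum (fun j _ => Nat.zero_le (d j))
    (Finset.mem_univ i)).trans (hd ▸ Nat.sub_le m t)
  let M : Matrix {p : Fin s × Fin m // p.2.val < d p.1} (Fin m) (ZMod 2) :=
    Matrix.of fun p => C p.1.1 p.1.2
  let w : {p : Fin s × Fin m // p.2.val < d p.1} → ZMod 2 :=
    fun p => (bigEndianEquiv (d p.1.1)).symm ⟨a p.1.1, ha p.1.1⟩ ⟨p.1.2, p.2⟩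
  have hmem (b : Fin m → ZMod 2) : (∀ i, (a i : ℝ) / 2 ^ d i ≤ phiMap m (C i *ᵥ b) ∧
      phiMap m (C i *ᵥ b) < ((a i : ℝ) + 1) / 2 ^ d i) ↔ M.mulVecLin b = w := by
    simp only [phiMap_mem_Ico_iff (hdm _) (ha _), funext_iff]
    exact ⟨fun hb p => hb p.1.1 ⟨p.1.2, p.2⟩,
      fun hb i j => hb ⟨(i, Fin.castLE (hdm i) j), j.isLt⟩⟩
  have hsurj : Function.Surjective M.mulVecLin :=
    Matrix.mulVecLin_surjective_of_linearIndependent_row (h d hd)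
  rw [digitalNet_eq_map_univ, Multiset.countP_map, ← Finset.filter_val, Finset.card_val,
    ← Fintype.card_subtype, ← Nat.card_eq_fintype_card,
    Nat.card_congr (Equiv.subtypeEquivRight hmem), LinearMap.natCard_fiber_of_surjective hsurj,
    Nat.card_zmod, Module.finrank_fin_fun, Module.finrank_fintype_fun_eq_card,
    card_subtype_val_lt_eq_sum d hdm, hd, Nat.sub_sub_self ht]

theorem stmt2 (m t s : ℕ) (hm : 1 ≤ m) (ht : t ≤ m)
    (C : Fin s → Matrix (Fin m) (Fin m) (ZMod 2))
    (h : ∀ d : Fin s → ℕ, (∑ i, d i) = m - t →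
      LinearIndependent (ZMod 2)
        (fun p : {p : Fin s × Fin m // p.2.val < d p.1} => C p.1.1 p.1.2)) :
    IsNet t m s (digitalNet m s C) :=
  stmt2_general m t s ht C h
end

section
/- For every integer m ≥ 1, the matrix P_m·J_m over F₂ satisfies (P_m·J_m)³ = I_m in F₂^{m×m}. -/
open Matrix

section Aux
open Polynomial Finset

lemma two_zero : (2 : Polynomial (ZMod 2)) = 0 := by
  have : ((2:ℕ) : Polynomial (ZMod 2)) = 0 := by
    rw [← Polynomial.C_eq_natCast]; norm_num; decide
  simpa using this

lemma x_eq : ((1 : Polynomial (ZMod 2)) + (X + 1)) = X := by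
  have := two_zero; ring_nf; linear_combination this

-- key polynomial identity: ∑_{k≤N} C(c,k)(1+X)^{N-k} = X^c (1+X)^{N-c} over ZMod 2
lemma poly_sum (c N : ℕ) (hc : c ≤ N) :
    (∑ k ∈ Finset.range (N+1), (C ((c.choose k : ℕ) : ZMod 2)) * (X + 1) ^ (N - k))
      = X ^ c * (X + 1) ^ (N - c) := by
  rw [← Finset.sum_subset (Finset.range_subset_range.2 (Nat.succ_le_succ hc))]
  · have h1 : ∀ k ∈ Finset.range (c+1),
        (C ((c.choose k : ℕ) : ZMod 2)) * (X + 1) ^ (N - k)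
          = ((1:Polynomial (ZMod 2)) ^ k * (X + 1) ^ (c - k) * (c.choose k : Polynomial (ZMod 2))) * (X + 1) ^ (N - c) := by
      intro k hk
      have hkc := Finset.mem_range.1 hk
      rw [one_pow, one_mul, mul_comm ((X+1:Polynomial (ZMod 2))^(c-k)), mul_assoc, ← pow_add,
        show c - k + (N - c) = N - k from by omega, Polynomial.C_eq_natCast]
    rw [Finset.sum_congr rfl h1, ← Finset.sum_mul, ← add_pow, x_eq]
  · intro k hk hk'
    have : c < k := by simp at hk hk'; omega
    simp [Nat.choose_eq_zero_of_lt this]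

-- coefficient extraction
lemma choose_sum (c N i : ℕ) (hc : c ≤ N) :
    (∑ k ∈ Finset.range (N+1), ((c.choose k : ℕ) : ZMod 2) * (((N-k).choose i : ℕ) : ZMod 2))
      = if c ≤ i then (((N-c).choose (i-c) : ℕ) : ZMod 2) else 0 := by
  have h := congrArg (fun p => Polynomial.coeff p i) (poly_sum c N hc)
  simp only [Polynomial.finset_sum_coeff, Polynomial.coeff_C_mul,
    Polynomial.coeff_X_add_one_pow] at h
  rw [h]
  by_cases hci : c ≤ i
  · rw [if_pos hci]
    have : i = (i - c) + c := by omega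
    rw [this, Polynomial.coeff_X_pow_mul, Polynomial.coeff_X_add_one_pow]
    simp
  · rw [if_neg hci]
    rw [Polynomial.coeff_X_pow_mul']
    simp [hci]

-- second identity for P^2 = 1 : ∑_k C(j,k) C(k,i) = δ_{ij}
lemma choose_sum2 (j N i : ℕ) (hj : j ≤ N) :
    (∑ k ∈ Finset.range (N+1), ((j.choose k : ℕ) : ZMod 2) * ((k.choose i : ℕ) : ZMod 2))
      = if i = j then 1 else 0 := by
  have key : (∑ k ∈ Finset.range (N+1), (C ((j.choose k : ℕ) : ZMod 2)) * (X + 1) ^ k)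
      = (X : Polynomial (ZMod 2)) ^ j := by
    rw [← Finset.sum_subset (Finset.range_subset_range.2 (Nat.succ_le_succ hj))]
    · have h1 : ∀ k ∈ Finset.range (j+1),
          (C ((j.choose k : ℕ) : ZMod 2)) * (X + 1) ^ k
            = ((X+1:Polynomial (ZMod 2)) ^ k * (1:Polynomial (ZMod 2)) ^ (j - k) * (j.choose k : Polynomial (ZMod 2))) := by
        intro k hk
        rw [one_pow, mul_one, mul_comm, Polynomial.C_eq_natCast]
      rw [Finset.sum_congr rfl h1, ← add_pow]
      rw [show ((X:Polynomial (ZMod 2)) + 1 + 1) = X from by linear_combination x_eq]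
    · intro k hk hk'
      have : j < k := by simp at hk hk'; omega
      simp [Nat.choose_eq_zero_of_lt this]
  have h := congrArg (fun p => Polynomial.coeff p i) key
  simp only [Polynomial.finset_sum_coeff, Polynomial.coeff_C_mul,
    Polynomial.coeff_X_add_one_pow, Polynomial.coeff_X_pow] at h
  rw [h]


lemma PJ_apply (n : ℕ) (i j : Fin (n+1)) :
    (Pmat (n+1) * Jmat (n+1)) i j = (((n - j.val).choose i.val : ℕ) : ZMod 2) := by
  rw [Matrix.mul_apply]
  rw [Finset.sum_eq_single (⟨n - j.val, by omega⟩ : Fin (n+1))]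
  · simp [Pmat, Jmat]
    intro h; exfalso; apply h; omega
  · intro t _ ht
    have h2 : ¬ (t.val + j.val = n) := by
      intro h; apply ht; apply Fin.ext; simp; omega
    simp [Jmat, h2]
  · intro h; exact absurd (Finset.mem_univ _) h

lemma JP_apply (n : ℕ) (i j : Fin (n+1)) :
    (Jmat (n+1) * Pmat (n+1)) i j = ((j.val.choose (n - i.val) : ℕ) : ZMod 2) := by
  rw [Matrix.mul_apply]
  rw [Finset.sum_eq_single (⟨n - i.val, by omega⟩ : Fin (n+1))]
  · simp [Pmat, Jmat]
    intro h; exfalso; apply h; omega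
  · intro t _ ht
    have h2 : ¬ (i.val + t.val = n) := by
      intro h; apply ht; apply Fin.ext; simp; omega
    simp [Jmat, h2]
  · intro h; exact absurd (Finset.mem_univ _) h

lemma PJ_sq (n : ℕ) :
    (Pmat (n+1) * Jmat (n+1)) * (Pmat (n+1) * Jmat (n+1)) = Jmat (n+1) * Pmat (n+1) := by
  ext i j
  rw [Matrix.mul_apply, JP_apply]
  simp only [PJ_apply]
  rw [Fin.sum_univ_eq_sum_range (fun k => (((n - k).choose i.val : ℕ) : ZMod 2) * (((n - j.val).choose k : ℕ) : ZMod 2))]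
  have : ∀ k ∈ Finset.range (n+1),
      (((n - k).choose i.val : ℕ) : ZMod 2) * (((n - j.val).choose k : ℕ) : ZMod 2)
        = (((n - j.val).choose k : ℕ) : ZMod 2) * (((n - k).choose i.val : ℕ) : ZMod 2) := by
    intro k _; ring
  rw [Finset.sum_congr rfl this, choose_sum (n - j.val) n i.val (by omega)]
  by_cases h : n - j.val ≤ i.val
  · rw [if_pos h]
    have hi : i.val ≤ n := by omega
    have hj : j.val ≤ n := by omega
    rw [show n - (n - j.val) = j.val from by omega,
      show i.val - (n - j.val) = j.val - (n - i.val) from by omega,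
      Nat.choose_symm (by omega)]
  · rw [if_neg h, Nat.choose_eq_zero_of_lt (by omega), Nat.cast_zero]

lemma P_sq (n : ℕ) : Pmat (n+1) * Pmat (n+1) = 1 := by
  ext i j
  rw [Matrix.mul_apply]
  simp only [Pmat, Matrix.of_apply]
  rw [Fin.sum_univ_eq_sum_range (fun k => ((k.choose i.val : ℕ) : ZMod 2) * ((j.val.choose k : ℕ) : ZMod 2))]
  have : ∀ k ∈ Finset.range (n+1),
      ((k.choose i.val : ℕ) : ZMod 2) * ((j.val.choose k : ℕ) : ZMod 2)
        = ((j.val.choose k : ℕ) : ZMod 2) * ((k.choose i.val : ℕ) : ZMod 2) := by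
    intro k _; ring
  rw [Finset.sum_congr rfl this, choose_sum2 j.val n i.val (by omega), Matrix.one_apply]
  simp [Fin.ext_iff]

lemma J_sq (n : ℕ) : Jmat (n+1) * Jmat (n+1) = 1 := by
  ext i j
  rw [Matrix.mul_apply]
  rw [Finset.sum_eq_single (⟨n - i.val, by omega⟩ : Fin (n+1))]
  · simp only [Jmat, Matrix.of_apply, Matrix.one_apply, Fin.ext_iff]
    have hi : i.val ≤ n := by omega
    have hj : j.val ≤ n := by omega
    by_cases h : i.val = j.val <;> simp [h]
    · rw [if_pos (by omega), if_pos (by omega)]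
    · intro h'; omega
  · intro t _ ht
    have h2 : ¬ (i.val + t.val = n) := by
      intro h; apply ht; apply Fin.ext; simp; omega
    simp [Jmat, h2]
  · intro h; exact absurd (Finset.mem_univ _) h

end Aux

theorem stmt6 (m : ℕ) (hm : 1 ≤ m) : (Pmat m * Jmat m) ^ 3 = 1 := by
  obtain ⟨n, rfl⟩ : ∃ n, m = n + 1 := ⟨m - 1, by omega⟩
  rw [pow_succ, pow_two, PJ_sq]
  have h3 : Jmat (n+1) * Pmat (n+1) * (Pmat (n+1) * Jmat (n+1))
      = Jmat (n+1) * ((Pmat (n+1) * Pmat (n+1)) * Jmat (n+1)) := by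
    simp only [Matrix.mul_assoc]
  rw [h3, P_sq, Matrix.one_mul, J_sq]
end

section
/- For every integer m ≥ 1, the m×m integer matrices P'_m and J_m satisfy (P'_m·J_m)³ = (−1)^{m−1}·I_m, where P'_m is the matrix with (i,j) entry (−1)^{i−1}·binom(j−1, i−1) and J_m is the anti-diagonal matrix with all anti-diagonal entries equal to 1. -/
/-!
Identify a vector `v ∈ ℤ^m` with the polynomial `∑ vₖ Xᵏ` of degree `< m`. Column `j` of `P'_m`
is `(1 - X)^j`, so `P'_m` acts as the involution `p(X) ↦ p(1 - X)`, while `J_m` reverses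
coefficients. Writing `n = m - 1`, column `j` of `J P J` is `X^j (X - 1)^(n-j)` and column `j` of
`J P` is `X^(n-j) (X - 1)^j`; substituting `1 - X` into the former gives `(-1)^n` times the latter,
i.e. `P (J P J) = (-1)^n J P`. Hence `(P J)^3 = P (J P J) (P J) = (-1)^n J P P J = (-1)^n`.
-/

open Matrix

/-- The signed Pascal matrix `P'_m` over `ℤ` (0-indexed entry `(i,j)` is
`(-1)^i * binom(j,i)`). -/
def Pint (m : ℕ) : Matrix (Fin m) (Fin m) ℤ :=
  Matrix.of fun i j => (-1) ^ i.val * (j.val.choose i.val : ℤ)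

def Jint (m : ℕ) : Matrix (Fin m) (Fin m) ℤ :=
  Matrix.of fun i j => if i.val + j.val = m - 1 then 1 else 0

open Polynomial

lemma Polynomial.coeff_one_sub_X_pow {R : Type*} [CommRing R] (k i : ℕ) :
    ((1 - X : R[X]) ^ k).coeff i = (-1) ^ i * (k.choose i : R) := by
  have hterm (l : ℕ) : (-X : R[X]) ^ l * 1 ^ (k - l) * (k.choose l : R[X]) =
      C ((-1) ^ l * (k.choose l : R)) * X ^ l := by
    rw [neg_pow, C_mul, C_pow, C_neg, C_1, map_natCast]; ring
  rw [sub_eq_neg_add, add_pow]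
  simp only [hterm, finsetSum_coeff, coeff_C_mul_X_pow]
  rw [Finset.sum_ite_eq]
  split_ifs with hi
  · rfl
  · simp [Nat.choose_eq_zero_of_lt (by simpa using hi : k < i)]

lemma Polynomial.X_pow_mul_X_sub_one_pow_comp_one_sub_X {R : Type*} [CommRing R] {n j : ℕ}
    (hj : j ≤ n) :
    (X ^ j * (X - 1) ^ (n - j) : R[X]).comp (1 - X) =
      C ((-1) ^ n) * (X ^ (n - j) * (X - 1) ^ j) := by
  obtain ⟨d, rfl⟩ := Nat.exists_eq_add_of_le hj
  simp only [mul_comp, pow_comp, X_comp, sub_comp, one_comp, Nat.add_sub_cancel_left, C_pow,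
    C_neg, C_1]
  rw [show (1 - X : R[X]) = -1 * (X - 1) by ring, mul_pow]
  ring

lemma Jint_eq_permMatrix (m : ℕ) : Jint m = Fin.revPerm.permMatrix ℤ := by
  ext i j
  simp only [Jint, of_apply, PEquiv.toMatrix_apply, Equiv.toPEquiv_apply, Option.mem_def,
    Option.some.injEq, Fin.revPerm_apply, Fin.ext_iff, Fin.val_rev]
  omega

lemma Jint_mul {ι : Type*} (m : ℕ) (M : Matrix (Fin m) ι ℤ) :
    Jint m * M = M.submatrix Fin.rev id := by
  rw [Jint_eq_permMatrix, PEquiv.toMatrix_toPEquiv_mul]; rfl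

lemma mul_Jint {ι : Type*} (m : ℕ) (M : Matrix ι (Fin m) ℤ) :
    M * Jint m = M.submatrix id Fin.rev := by
  rw [Jint_eq_permMatrix, PEquiv.mul_toMatrix_toPEquiv]; rfl

lemma Jint_mul_self (m : ℕ) : Jint m * Jint m = 1 := by
  rw [Jint_eq_permMatrix, ← permMatrix_mul,
    show (Fin.revPerm : Equiv.Perm (Fin m)) * Fin.revPerm = 1 from Equiv.ext Fin.rev_rev,
    permMatrix_one]

lemma Pint_apply (m : ℕ) (i j : Fin m) : Pint m i j = ((1 - X : ℤ[X]) ^ (j : ℕ)).coeff i := by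
  rw [coeff_one_sub_X_pow]; rfl

lemma Pint_mul_apply_eq_coeff_comp {ι : Type*} {m : ℕ} (M : Matrix (Fin m) ι ℤ) (q : ι → ℤ[X])
    (hq : ∀ j, (q j).natDegree < m) (hM : ∀ k j, M k j = (q j).coeff k) (i : Fin m) (j : ι) :
    (Pint m * M) i j = ((q j).comp (1 - X)).coeff i := by
  have hcomp : (q j).comp (1 - X) = ∑ k : Fin m, C ((q j).coeff k) * (1 - X) ^ (k : ℕ) := by
    rw [comp_eq_sum_left, sum_over_range' _ (by simp) m (hq j),
      Fin.sum_univ_eq_sum_range (fun k => C ((q j).coeff k) * (1 - X) ^ k)]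
  rw [hcomp, finsetSum_coeff, mul_apply]
  simp only [Pint_apply, hM, coeff_C_mul]
  exact Finset.sum_congr rfl fun _ _ => mul_comm _ _

lemma Pint_mul_self (m : ℕ) : Pint m * Pint m = 1 := by
  ext i j
  rw [Pint_mul_apply_eq_coeff_comp _ (fun j : Fin m => (1 - X : ℤ[X]) ^ (j : ℕ)) _ (Pint_apply m)]
  · simp [one_apply, coeff_X_pow, Fin.ext_iff]
  · intro j
    exact (show _ ≤ (j : ℕ) by compute_degree).trans_lt j.isLt

lemma Jint_mul_Pint_apply (n : ℕ) (k j : Fin (n + 1)) :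
    (Jint (n + 1) * Pint (n + 1)) k j = (X ^ (n - j) * (X - 1) ^ (j : ℕ) : ℤ[X]).coeff k := by
  rw [Jint_mul, submatrix_apply, Pint_apply, coeff_X_pow_mul', id, Fin.val_rev,
    show (X - 1 : ℤ[X]) = C (-1) * (1 - X) by rw [C_neg, C_1]; ring, mul_pow, ← C_pow,
    coeff_C_mul, coeff_one_sub_X_pow, coeff_one_sub_X_pow]
  split_ifs with h
  · rw [show n + 1 - (k + 1) = n - k by omega, show (k : ℕ) - (n - j) = j - (n - k) by omega,
      Nat.choose_symm (by omega), ← mul_assoc, ← pow_add,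
      show (j : ℕ) + (j - (n - k)) = n - k + 2 * (j - (n - k)) by omega, pow_add, pow_mul,
      neg_one_sq, one_pow, mul_one]
  · rw [Nat.choose_eq_zero_of_lt (by omega), Nat.cast_zero, mul_zero]

lemma Pint_mul_Jint_mul_Pint_mul_Jint (n : ℕ) :
    Pint (n + 1) * (Jint (n + 1) * Pint (n + 1) * Jint (n + 1)) =
      (-1) ^ n • (Jint (n + 1) * Pint (n + 1)) := by
  ext i j
  rw [Pint_mul_apply_eq_coeff_comp _ (fun j : Fin (n + 1) => X ^ (j : ℕ) * (X - 1) ^ (n - j)),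
    X_pow_mul_X_sub_one_pow_comp_one_sub_X (by omega), coeff_C_mul, Matrix.smul_apply,
    Jint_mul_Pint_apply, smul_eq_mul]
  · intro j
    have : (X ^ (j : ℕ) * (X - 1) ^ (n - j) : ℤ[X]).natDegree ≤ j + (n - j) := by compute_degree
    omega
  · intro k j
    rw [mul_Jint, submatrix_apply, id, Jint_mul_Pint_apply, Fin.val_rev]
    congr 3 <;> omega

theorem stmt8_general (m : ℕ) :
    (Pint m * Jint m) ^ 3 = ((-1 : ℤ) ^ (m - 1)) • (1 : Matrix (Fin m) (Fin m) ℤ) := by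
  obtain _ | n := m
  · exact Subsingleton.elim _ _
  calc (Pint (n + 1) * Jint (n + 1)) ^ 3
      = Pint (n + 1) * (Jint (n + 1) * Pint (n + 1) * Jint (n + 1)) *
          (Pint (n + 1) * Jint (n + 1)) := by
        simp only [pow_succ, pow_zero, one_mul, mul_assoc]
    _ = (-1) ^ n • (Jint (n + 1) * (Pint (n + 1) * Pint (n + 1)) * Jint (n + 1)) := by
        rw [Pint_mul_Jint_mul_Pint_mul_Jint, smul_mul_assoc]
        simp only [mul_assoc]
    _ = (-1) ^ (n + 1 - 1) • 1 := by
        rw [Pint_mul_self, mul_one, Jint_mul_self, Nat.add_sub_cancel]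

theorem stmt8 (m : ℕ) (hm : 1 ≤ m) :
    (Pint m * Jint m) ^ 3 = ((-1 : ℤ) ^ (m - 1)) • (1 : Matrix (Fin m) (Fin m) ℤ) :=
  stmt8_general m
end

section
/- For every integer m ≥ 1, the digital net generated by (I_m, P_m·J_m, (P_m·J_m)²) is a (0,m,3)-net over F₂. -/
open Matrix

section AuxPoly
open Polynomial
noncomputable def pol (m : ℕ) (x : Fin m → ZMod 2) : Polynomial (ZMod 2) :=
  ∑ r : Fin m, Polynomial.monomial r.val (x r)

lemma pol_coeff (m : ℕ) (x : Fin m → ZMod 2) (n : ℕ) :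
    (pol m x).coeff n = if h : n < m then x ⟨n, h⟩ else 0 := by
  rw [pol, Polynomial.finset_sum_coeff]
  split_ifs with h
  · rw [Finset.sum_eq_single (⟨n, h⟩ : Fin m)]
    · simp [Polynomial.coeff_monomial]
    · intro b _ hb
      rw [Polynomial.coeff_monomial, if_neg]
      intro hc
      exact hb (by ext; exact hc)
    · simp
  · apply Finset.sum_eq_zero
    intro b _
    rw [Polynomial.coeff_monomial, if_neg]
    have := b.isLt
    omega

lemma pol_eq_zero {m : ℕ} {x : Fin m → ZMod 2} (h : pol m x = 0) : x = 0 := by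
  funext k
  have := congrArg (fun p => Polynomial.coeff p k.val) h
  simp only [Polynomial.coeff_zero, pol_coeff, k.isLt, dif_pos] at this
  simpa using this

lemma pol_natDegree {m : ℕ} (x : Fin m → ZMod 2) : (pol m x).natDegree ≤ m - 1 := by
  rw [Polynomial.natDegree_le_iff_coeff_eq_zero]
  intro N hN
  rw [pol_coeff, dif_neg (by omega)]

lemma Jmat_mulVec (m : ℕ) (x : Fin m → ZMod 2) (k : Fin m) :
    (Jmat m).mulVec x k = x ⟨m - 1 - k.val, by have := k.isLt; omega⟩ := by
  have hk := k.isLt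
  show ∑ j, Jmat m k j * x j = _
  rw [Finset.sum_eq_single (⟨m - 1 - k.val, by omega⟩ : Fin m)]
  · rw [Jmat, Matrix.of_apply, if_pos (by simp; omega), one_mul]
  · intro b _ hb
    rw [Jmat, Matrix.of_apply, if_neg, zero_mul]
    intro hc
    exact hb (by ext; simp; omega)
  · simp

lemma pol_J (m : ℕ) (hm : 1 ≤ m) (x : Fin m → ZMod 2) :
    pol m ((Jmat m).mulVec x) = Polynomial.reflect (m-1) (pol m x) := by
  ext n
  rw [Polynomial.coeff_reflect, pol_coeff, pol_coeff]
  by_cases h : n < m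
  · rw [dif_pos h, Polynomial.revAt_le (by omega : n ≤ m - 1), dif_pos (by omega : m-1-n < m),
      Jmat_mulVec]
  · have hrev : Polynomial.revAt (m-1) n = n := by
      rw [← Polynomial.revAtFun_eq]
      unfold Polynomial.revAtFun
      rw [if_neg (by omega)]
    rw [dif_neg h, hrev, dif_neg h]

lemma pol_P (m : ℕ) (x : Fin m → ZMod 2) :
    pol m ((Pmat m).mulVec x) = Polynomial.taylor 1 (pol m x) := by
  have hR : ∀ n : ℕ, (Polynomial.taylor (1:ZMod 2) (pol m x)).coeff n
      = ∑ j : Fin m, (j.1.choose n : ZMod 2) * x j := by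
    intro n
    rw [pol, map_sum, Polynomial.finset_sum_coeff]
    refine Finset.sum_congr rfl fun j _ => ?_
    rw [Polynomial.taylor_monomial, Polynomial.coeff_C_mul, Polynomial.C_1,
      Polynomial.coeff_X_add_one_pow, mul_comm]
  ext n
  rw [hR, pol_coeff]
  split_ifs with h
  · show ∑ j, Pmat m ⟨n, h⟩ j * x j = _
    rfl
  · symm
    apply Finset.sum_eq_zero
    intro j _
    rw [Nat.choose_eq_zero_of_lt (by have := j.isLt; omega), Nat.cast_zero, zero_mul]

lemma taylor_X_add_one : Polynomial.taylor (1:ZMod 2) (X+1) = X := by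
  rw [Polynomial.taylor_apply]
  simp only [add_comp, X_comp, one_comp]
  rw [add_assoc, ← Polynomial.C_1, ← Polynomial.C_add]
  rw [show ((1:ZMod 2)+1) = 0 by decide, Polynomial.C_0, add_zero]

lemma taylor_X_add_one_pow (d : ℕ) :
    Polynomial.taylor (1:ZMod 2) ((X+1)^d) = X^d := by
  rw [Polynomial.taylor_apply, Polynomial.pow_comp, ← Polynomial.taylor_apply,
    taylor_X_add_one]

lemma taylor_X_pow (d : ℕ) :
    Polynomial.taylor (1:ZMod 2) (X^d) = (X+1)^d := by
  rw [Polynomial.taylor_apply, Polynomial.pow_comp, X_comp, Polynomial.C_1]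

lemma taylor_invol (f : Polynomial (ZMod 2)) :
    Polynomial.taylor 1 (Polynomial.taylor 1 f) = f := by
  rw [Polynomial.taylor_taylor, show ((1:ZMod 2)+1) = 0 by decide, Polynomial.taylor_zero]

lemma taylor_dvd_iff (d : ℕ) (f : Polynomial (ZMod 2)) :
    (X+1)^d ∣ f ↔ X^d ∣ Polynomial.taylor 1 f := by
  constructor
  · rintro ⟨u, rfl⟩
    rw [Polynomial.taylor_mul, taylor_X_add_one_pow]
    exact Dvd.intro _ rfl
  · rintro ⟨u, hu⟩
    have : f = Polynomial.taylor 1 (X^d * u) := by rw [← hu, taylor_invol]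
    rw [this, Polynomial.taylor_mul, taylor_X_pow]
    exact Dvd.intro _ rfl

lemma reflect_X_add_one_pow_s9 (d : ℕ) :
    ((X + 1 : Polynomial (ZMod 2))^d).reflect d = (X+1)^d := by
  ext n
  rw [Polynomial.coeff_reflect, Polynomial.coeff_X_add_one_pow, Polynomial.coeff_X_add_one_pow]
  rcases le_or_gt n d with h | h
  · rw [Polynomial.revAt_le h, Nat.choose_symm h]
  · have : Polynomial.revAt d n = n := by
      rw [← Polynomial.revAtFun_eq]; unfold Polynomial.revAtFun; rw [if_neg (by omega)]
    rw [this]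

lemma reflect_invol (N : ℕ) (f : Polynomial (ZMod 2)) : (f.reflect N).reflect N = f := by
  ext n
  rw [Polynomial.coeff_reflect, Polynomial.coeff_reflect, Polynomial.revAt_invol]

lemma natDegree_reflect_le {N : ℕ} {f : Polynomial (ZMod 2)} (hf : f.natDegree ≤ N) :
    (f.reflect N).natDegree ≤ N := by
  rw [Polynomial.natDegree_le_iff_coeff_eq_zero]
  intro n hn
  rw [Polynomial.coeff_reflect]
  have : Polynomial.revAt N n = n := by
    rw [← Polynomial.revAtFun_eq]; unfold Polynomial.revAtFun; rw [if_neg (by omega)]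
  rw [this]
  exact Polynomial.coeff_eq_zero_of_natDegree_lt (by omega)

lemma reflect_dvd {m d : ℕ} (hm : 1 ≤ m) {f : Polynomial (ZMod 2)} (hf : f.natDegree ≤ m - 1)
    (h : (X+1)^d ∣ f) : (X+1)^d ∣ f.reflect (m-1) := by
  obtain ⟨u, rfl⟩ := h
  by_cases hu : u = 0
  · simp [hu]
  · have hX1 : (X+1 : Polynomial (ZMod 2)) ≠ 0 := by
      intro hc
      have := congrArg (fun p => Polynomial.coeff p 0) hc
      simp at this
    have hdeg : ((X+1 : Polynomial (ZMod 2))^d).natDegree = d := by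
      rw [Polynomial.natDegree_pow, ← Polynomial.C_1, Polynomial.natDegree_X_add_C, mul_one]
    have hmul : ((X+1 : Polynomial (ZMod 2))^d * u).natDegree = d + u.natDegree := by
      rw [Polynomial.natDegree_mul (pow_ne_zero _ hX1) hu, hdeg]
    have hd : d + u.natDegree ≤ m - 1 := by rw [← hmul]; exact hf
    have hrefl := Polynomial.reflect_mul ((X+1 : Polynomial (ZMod 2))^d) u
      (F := d) (G := m - 1 - d) (le_of_eq hdeg) (by omega)
    rw [show d + (m - 1 - d) = m - 1 by omega] at hrefl
    rw [hrefl, reflect_X_add_one_pow_s9]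
    exact Dvd.intro _ rfl

lemma reflect_dvd_iff {m d : ℕ} (hm : 1 ≤ m) {f : Polynomial (ZMod 2)} (hf : f.natDegree ≤ m - 1) :
    (X+1)^d ∣ f.reflect (m-1) ↔ (X+1)^d ∣ f := by
  constructor
  · intro h
    have := reflect_dvd hm (natDegree_reflect_le hf) h
    rwa [reflect_invol] at this
  · exact reflect_dvd hm hf

lemma kernel_lemma (m : ℕ) (hm : 1 ≤ m) (d1 d2 d3 : ℕ) (hsum : d1 + d2 + d3 = m)
    (x : Fin m → ZMod 2)
    (h1 : ∀ k : Fin m, k.val < d1 → x k = 0)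
    (h2 : ∀ k : Fin m, k.val < d2 → (Pmat m * Jmat m).mulVec x k = 0)
    (h3 : ∀ k : Fin m, k.val < d3 → ((Pmat m * Jmat m) ^ 2).mulVec x k = 0) :
    x = 0 := by
  set f := pol m x with hf
  -- the image vector under PJ and its polynomial
  set y := (Pmat m * Jmat m).mulVec x with hy
  have hyy : y = (Pmat m).mulVec ((Jmat m).mulVec x) := by
    rw [hy, Matrix.mulVec_mulVec]
  set g := pol m y with hg
  have hgf : g = Polynomial.taylor 1 (f.reflect (m-1)) := by
    rw [hg, hyy, pol_P, pol_J m hm]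
  have hzz : ((Pmat m * Jmat m) ^ 2).mulVec x = (Pmat m).mulVec ((Jmat m).mulVec y) := by
    rw [hy]
    simp only [Matrix.mulVec_mulVec]
    rw [pow_two, mul_assoc]
  have hdf : f.natDegree ≤ m - 1 := pol_natDegree x
  have hdg : g.natDegree ≤ m - 1 := pol_natDegree y
  -- condition 1 : X^d1 ∣ f
  have c1 : X ^ d1 ∣ f := by
    rw [Polynomial.X_pow_dvd_iff]
    intro k hk
    rw [hf, pol_coeff, dif_pos (by omega)]
    exact h1 _ hk
  -- condition 2 : (X+1)^d2 ∣ f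
  have c2 : (X + 1) ^ d2 ∣ f := by
    have hXg : X ^ d2 ∣ g := by
      rw [Polynomial.X_pow_dvd_iff]
      intro k hk
      rw [hg, pol_coeff, dif_pos (by omega)]
      exact h2 _ hk
    rw [hgf] at hXg
    rw [← reflect_dvd_iff hm hdf]
    exact (taylor_dvd_iff d2 (f.reflect (m-1))).mpr hXg
  -- condition 3 : X^d3 ∣ reflect (m-1) f, i.e. top coefficients vanish
  have c3 : X ^ d3 ∣ f.reflect (m-1) := by
    have hXh : X ^ d3 ∣ pol m (((Pmat m * Jmat m) ^ 2).mulVec x) := by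
      rw [Polynomial.X_pow_dvd_iff]
      intro k hk
      rw [pol_coeff, dif_pos (by omega)]
      exact h3 _ hk
    rw [hzz, pol_P, pol_J m hm, ← hg] at hXh
    -- hXh : X^d3 ∣ taylor 1 (reflect (m-1) g)
    have : (X + 1) ^ d3 ∣ g.reflect (m-1) := (taylor_dvd_iff d3 _).mpr hXh
    have hg' : (X + 1) ^ d3 ∣ g := (reflect_dvd_iff hm hdg).mp this
    rw [hgf] at hg'
    have := (taylor_dvd_iff d3 _).mp hg'
    rwa [taylor_invol] at this
  -- top coefficients of f vanish
  have ctop : ∀ j : ℕ, m - d3 ≤ j → f.coeff j = 0 := by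
    intro j hj
    by_cases hjm : j < m
    · have hk : m - 1 - j < d3 := by omega
      have := Polynomial.X_pow_dvd_iff.mp c3 (m - 1 - j) hk
      rw [Polynomial.coeff_reflect, Polynomial.revAt_le (by omega)] at this
      rwa [show m - 1 - (m - 1 - j) = j by omega] at this
    · rw [hf, pol_coeff, dif_neg (by omega)]
  -- conclude f = 0
  have hf0 : f = 0 := by
    by_contra hne
    have hcop : IsCoprime (X ^ d1 : Polynomial (ZMod 2)) ((X + 1) ^ d2) := by
      apply IsCoprime.pow
      refine ⟨1, 1, ?_⟩
      have h11 : (1 + 1 : Polynomial (ZMod 2)) = 0 := by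
        rw [← Polynomial.C_1, ← Polynomial.C_add, show ((1:ZMod 2)+1) = 0 by decide,
          Polynomial.C_0]
      linear_combination (X : Polynomial (ZMod 2)) * h11
    have hdvd : X ^ d1 * (X + 1) ^ d2 ∣ f := hcop.mul_dvd c1 c2
    have hXne : (X + 1 : Polynomial (ZMod 2)) ≠ 0 := by
      intro hc
      have := congrArg (fun p => Polynomial.coeff p 0) hc
      simp at this
    have hddeg : (X ^ d1 * (X + 1) ^ d2 : Polynomial (ZMod 2)).natDegree = d1 + d2 := by
      rw [Polynomial.natDegree_mul (pow_ne_zero _ Polynomial.X_ne_zero) (pow_ne_zero _ hXne),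
        Polynomial.natDegree_pow, Polynomial.natDegree_pow, Polynomial.natDegree_X,
        ← Polynomial.C_1, Polynomial.natDegree_X_add_C]
      ring
    have hge : d1 + d2 ≤ f.natDegree := by
      rw [← hddeg]
      exact Polynomial.natDegree_le_of_dvd hdvd hne
    have : f.coeff f.natDegree = 0 := ctop _ (by omega)
    exact (Polynomial.leadingCoeff_ne_zero.mpr hne) this
  exact pol_eq_zero hf0

end AuxPoly

section AuxBits
def bitsVal (d : ℕ) (z : Fin d → ZMod 2) : ℕ := ∑ k : Fin d, (z k).val * 2 ^ (d - 1 - k.val)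

def bitVec (d : ℕ) (a : ℕ) : Fin d → ZMod 2 := fun k => if a.testBit (d - 1 - k.val) then 1 else 0

lemma sum_two_pow (d : ℕ) : ∑ j ∈ Finset.range d, 2^j = 2^d - 1 := by
  induction d with
  | zero => simp
  | succ d ih =>
    rw [Finset.sum_range_succ, ih, pow_succ]
    have := Nat.one_le_two_pow (n := d)
    omega

lemma bitsVal_lt (d : ℕ) (z : Fin d → ZMod 2) : bitsVal d z < 2^d := by
  have h1 : bitsVal d z ≤ ∑ k : Fin d, 2^(d-1-k.val) := by
    apply Finset.sum_le_sum
    intro k _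
    have hv : (z k).val ≤ 1 := by have := ZMod.val_lt (z k); omega
    calc (z k).val * 2^(d-1-k.val) ≤ 1 * 2^(d-1-k.val) := Nat.mul_le_mul_right _ hv
    _ = 2^(d-1-k.val) := one_mul _
  have h2 : ∑ k : Fin d, 2^(d-1-k.val) = 2^d - 1 := by
    rw [Fin.sum_univ_eq_sum_range (fun j => 2^(d-1-j)) d, Finset.sum_range_reflect,
      sum_two_pow]
  have := Nat.one_le_two_pow (n := d)
  omega

lemma testBit_sum (d : ℕ) : ∀ a : ℕ, a < 2^d →
    ∑ j ∈ Finset.range d, (a.testBit j).toNat * 2^j = a := by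
  induction d with
  | zero => intro a ha; simp at ha ⊢; omega
  | succ d ih =>
    intro a ha
    rw [Finset.sum_range_succ']
    have hdiv : a / 2 < 2^d := by
      rw [Nat.div_lt_iff_lt_mul two_pos, ← pow_succ]
      exact ha
    have hs : ∀ i ∈ Finset.range d, (a.testBit (i+1)).toNat * 2^(i+1)
        = 2 * ((a/2).testBit i).toNat * 2^i := by
      intro i _
      rw [Nat.testBit_add_one]
      ring
    rw [Finset.sum_congr rfl hs]
    simp only [mul_assoc]
    rw [← Finset.mul_sum, ih (a/2) hdiv]
    have h0 : (a.testBit 0).toNat = a % 2 := by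
      rw [Nat.testBit_zero]
      rcases Nat.mod_two_eq_zero_or_one a with h | h <;> simp [h]
    rw [pow_zero, mul_one, h0]
    omega

lemma bitsVal_bitVec (d a : ℕ) (ha : a < 2^d) : bitsVal d (bitVec d a) = a := by
  unfold bitsVal bitVec
  have h1 : ∀ k : Fin d, ((if a.testBit (d-1-k.val) then (1:ZMod 2) else 0)).val * 2^(d-1-k.val)
      = (a.testBit (d-1-k.val)).toNat * 2^(d-1-k.val) := by
    intro k
    cases a.testBit (d-1-k.val) <;> rfl
  rw [Finset.sum_congr rfl (fun k _ => h1 k),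
    Fin.sum_univ_eq_sum_range (fun j => (a.testBit (d-1-j)).toNat * 2^(d-1-j)) d,
    Finset.sum_range_reflect (fun j => (a.testBit j).toNat * 2^j) d]
  exact testBit_sum d a ha

lemma bitsVal_eq_iff {d a : ℕ} (ha : a < 2^d) (z : Fin d → ZMod 2) :
    bitsVal d z = a ↔ z = bitVec d a := by
  constructor
  · intro h
    have hV : Function.Bijective
        (fun w : Fin d → ZMod 2 => (⟨bitsVal d w, bitsVal_lt d w⟩ : Fin (2^d))) := by
      rw [Fintype.bijective_iff_surjective_and_card]
      constructor
      · intro b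
        exact ⟨bitVec d b.val, by simp [bitsVal_bitVec d b.val b.isLt]⟩
      · simp [ZMod.card]
    apply hV.injective
    simp [h, bitsVal_bitVec d a ha]
  · rintro rfl
    exact bitsVal_bitVec d a ha

lemma geom_half (n : ℕ) : ∑ j ∈ Finset.range n, (1:ℝ)/2^(j+1) = 1 - 1/2^n := by
  induction n with
  | zero => simp
  | succ n ih =>
    rw [Finset.sum_range_succ, ih]
    have h : (2:ℝ)^n ≠ 0 := by positivity
    field_simp
    ring

lemma phi_bounds (m d : ℕ) (hd : d ≤ m) (y : Fin m → ZMod 2) :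
    (bitsVal d (fun k => y (Fin.castLE hd k)) : ℝ) ≤ 2^d * phiMap m y ∧
    2^d * phiMap m y < (bitsVal d (fun k => y (Fin.castLE hd k)) : ℝ) + 1 := by
  classical
  set Y : ℕ → ℕ := fun k => if h : k < m then (y ⟨k, h⟩).val else 0 with hY
  have h1 : phiMap m y = ∑ k ∈ Finset.range m, (Y k : ℝ)/2^(k+1) := by
    rw [phiMap, ← Fin.sum_univ_eq_sum_range (fun k => (Y k : ℝ)/2^(k+1)) m]
    refine Finset.sum_congr rfl fun k _ => ?_
    simp [hY, k.isLt]
  have h2 : (bitsVal d (fun k => y (Fin.castLE hd k)) : ℝ)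
      = ∑ k ∈ Finset.range d, (Y k : ℝ) * 2^(d-1-k) := by
    rw [bitsVal, Nat.cast_sum, ← Fin.sum_univ_eq_sum_range (fun k => (Y k : ℝ) * 2^(d-1-k)) d]
    refine Finset.sum_congr rfl fun k _ => ?_
    have hk : (k : ℕ) < m := lt_of_lt_of_le k.isLt hd
    have hYk : Y k.val = (y (Fin.castLE hd k)).val := dif_pos hk
    rw [hYk]
    push_cast
    ring
  have h3 : 2^d * phiMap m y = ∑ k ∈ Finset.range m, (Y k : ℝ) * (2^d / 2^(k+1)) := by
    rw [h1, Finset.mul_sum]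
    refine Finset.sum_congr rfl fun k _ => ?_
    ring
  have h4 : ∀ k, k < d → (Y k : ℝ) * (2^d / 2^(k+1)) = (Y k : ℝ) * 2^(d-1-k) := by
    intro k hk
    congr 1
    rw [div_eq_iff (by positivity), ← pow_add]
    congr 1
    omega
  have hYle : ∀ k, Y k ≤ 1 := by
    intro k
    rcases Nat.lt_or_ge k m with h | h
    · have hYk : Y k = (y ⟨k, h⟩).val := dif_pos h
      rw [hYk]
      have := ZMod.val_lt (y ⟨k, h⟩)
      omega
    · have hYk : Y k = 0 := dif_neg (by omega)
      omega
  constructor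
  · rw [h2, h3]
    calc ∑ k ∈ Finset.range d, (Y k : ℝ) * 2^(d-1-k)
        = ∑ k ∈ Finset.range d, (Y k : ℝ) * (2^d / 2^(k+1)) := by
          refine Finset.sum_congr rfl fun k hk => ?_
          rw [h4 k (Finset.mem_range.mp hk)]
      _ ≤ ∑ k ∈ Finset.range m, (Y k : ℝ) * (2^d / 2^(k+1)) := by
          apply Finset.sum_le_sum_of_subset_of_nonneg
          · exact Finset.range_subset_range.mpr hd
          · intro k _ _
            positivity
  · rw [h2, h3]
    have hsplit : ∑ k ∈ Finset.range m, (Y k : ℝ) * (2^d / 2^(k+1))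
        = ∑ k ∈ Finset.range d, (Y k : ℝ) * (2^d / 2^(k+1))
          + ∑ k ∈ Finset.Ico d m, (Y k : ℝ) * (2^d / 2^(k+1)) := by
      simp only [Finset.range_eq_Ico]
      rw [← Finset.sum_Ico_consecutive _ (Nat.zero_le d) hd]
    have htail : ∑ k ∈ Finset.Ico d m, (Y k : ℝ) * (2^d / 2^(k+1)) < 1 := by
      have hb : ∑ k ∈ Finset.Ico d m, (Y k : ℝ) * (2^d / 2^(k+1))
          ≤ ∑ k ∈ Finset.Ico d m, (2^d / 2^(k+1) : ℝ) := by
        apply Finset.sum_le_sum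
        intro k _
        have : (Y k : ℝ) ≤ 1 := by exact_mod_cast hYle k
        calc (Y k : ℝ) * (2^d / 2^(k+1)) ≤ 1 * (2^d / 2^(k+1)) := by
              apply mul_le_mul_of_nonneg_right this (by positivity)
          _ = 2^d / 2^(k+1) := one_mul _
      have heq : ∑ k ∈ Finset.Ico d m, ((2:ℝ)^d / 2^(k+1))
          = ∑ j ∈ Finset.range (m-d), (1:ℝ)/2^(j+1) := by
        rw [Finset.sum_Ico_eq_sum_range]
        refine Finset.sum_congr rfl fun j _ => ?_
        rw [div_eq_div_iff (by positivity) (by positivity), one_mul, ← pow_add,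
          Nat.add_assoc]
      rw [heq, geom_half] at hb
      have : (0:ℝ) < 1/2^(m-d) := by positivity
      linarith
    have hhead : ∑ k ∈ Finset.range d, (Y k : ℝ) * (2^d / 2^(k+1))
        = ∑ k ∈ Finset.range d, (Y k : ℝ) * 2^(d-1-k) := by
      refine Finset.sum_congr rfl fun k hk => h4 k (Finset.mem_range.mp hk)
    rw [hsplit, hhead]
    linarith

lemma interval_iff (m d a : ℕ) (hd : d ≤ m) (ha : a < 2^d) (y : Fin m → ZMod 2) :
    ((a:ℝ)/2^d ≤ phiMap m y ∧ phiMap m y < ((a:ℝ)+1)/2^d) ↔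
      (fun k : Fin d => y (Fin.castLE hd k)) = bitVec d a := by
  obtain ⟨hl, hh⟩ := phi_bounds m d hd y
  rw [← bitsVal_eq_iff ha]
  set A := bitsVal d (fun k => y (Fin.castLE hd k)) with hA
  have h2 : (0:ℝ) < 2^d := by positivity
  constructor
  · rintro ⟨l1, l2⟩
    have l1' : (a:ℝ) ≤ 2^d * phiMap m y := by
      rw [div_le_iff₀ h2] at l1
      linarith
    have l2' : 2^d * phiMap m y < (a:ℝ) + 1 := by
      rw [lt_div_iff₀ h2] at l2
      linarith
    have e1 : (A:ℝ) < (a:ℝ) + 1 := lt_of_le_of_lt hl l2'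
    have e2 : (a:ℝ) < (A:ℝ) + 1 := lt_of_le_of_lt l1' hh
    have e1' : A < a + 1 := by exact_mod_cast e1
    have e2' : a < A + 1 := by exact_mod_cast e2
    omega
  · intro h
    rw [← h] at *
    constructor
    · rw [div_le_iff₀ h2]
      calc (A:ℝ) ≤ 2^d * phiMap m y := hl
        _ = phiMap m y * 2^d := mul_comm _ _
    · rw [lt_div_iff₀ h2]
      calc phiMap m y * 2^d = 2^d * phiMap m y := mul_comm _ _
        _ < (A:ℝ) + 1 := hh

end AuxBits

lemma digitsVec_inj (m : ℕ) : Function.Injective (fun l : Fin (2^m) => digitsVec m l.val) := by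
  intro l l' h
  apply Fin.ext
  apply Nat.eq_of_testBit_eq
  intro k
  rcases Nat.lt_or_ge k m with hk | hk
  · have hh := congrFun h ⟨k, hk⟩
    simp only [digitsVec] at hh
    cases hb : l.val.testBit k <;> cases hb' : l'.val.testBit k <;>
      rw [hb, hb'] at hh <;> simp_all
  · have b1 : l.val.testBit k = false :=
      Nat.testBit_lt_two_pow (lt_of_lt_of_le l.isLt (Nat.pow_le_pow_right (by norm_num) hk))
    have b2 : l'.val.testBit k = false :=
      Nat.testBit_lt_two_pow (lt_of_lt_of_le l'.isLt (Nat.pow_le_pow_right (by norm_num) hk))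
    rw [b1, b2]

theorem stmt9 (m : ℕ) (hm : 1 ≤ m) :
    IsNet 0 m 3 (digitalNet m 3 ![1, Pmat m * Jmat m, (Pmat m * Jmat m) ^ 2]) := by
  classical
  intro d hsum a ha
  rw [Nat.sub_zero] at hsum
  have hd : ∀ i, d i ≤ m := fun i => by
    rw [← hsum]
    exact Finset.single_le_sum (fun j _ => Nat.zero_le (d j)) (Finset.mem_univ i)
  set C : Fin 3 → Matrix (Fin m) (Fin m) (ZMod 2) :=
    ![1, Pmat m * Jmat m, (Pmat m * Jmat m) ^ 2] with hC
  have hC0 : C 0 = 1 := rfl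
  have hC1 : C 1 = Pmat m * Jmat m := rfl
  have hC2 : C 2 = (Pmat m * Jmat m) ^ 2 := rfl
  set Φ : (Fin m → ZMod 2) → (∀ i : Fin 3, Fin (d i) → ZMod 2) :=
    fun y i k => (C i).mulVec y (Fin.castLE (hd i) k) with hΦ
  -- injectivity of Φ
  have hΦinj : Function.Injective Φ := by
    intro y y' h
    have key : ∀ (i : Fin 3) (k : Fin m), k.val < d i → (C i).mulVec (y - y') k = 0 := by
      intro i k hk
      rw [Matrix.mulVec_sub]
      have hcast : Fin.castLE (hd i) (⟨k.val, hk⟩ : Fin (d i)) = k := rfl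
      have hh := congrFun (congrFun h i) (⟨k.val, hk⟩ : Fin (d i))
      simp only [hΦ, hcast] at hh
      rw [Pi.sub_apply, hh, sub_self]
    have hz : y - y' = 0 := by
      apply kernel_lemma m hm (d 0) (d 1) (d 2)
        (by rw [← hsum, Fin.sum_univ_three])
      · intro k hk
        have := key 0 k hk
        rwa [hC0, Matrix.one_mulVec] at this
      · intro k hk
        have := key 1 k hk
        rwa [hC1] at this
      · intro k hk
        have := key 2 k hk
        rwa [hC2] at this
    have := sub_eq_zero.mp hz
    exact this
  have hΦbij : Function.Bijective Φ := by
    rw [Fintype.bijective_iff_injective_and_card]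
    refine ⟨hΦinj, ?_⟩
    have hL : Fintype.card (Fin m → ZMod 2) = 2 ^ m := by
      simp [Fintype.card_fun, ZMod.card]
    have hR : Fintype.card (∀ i : Fin 3, Fin (d i) → ZMod 2) = 2 ^ m := by
      rw [Fintype.card_pi]
      have hc : ∀ i : Fin 3, Fintype.card (Fin (d i) → ZMod 2) = 2 ^ (d i) := fun i => by
        simp [Fintype.card_fun, ZMod.card]
      rw [Finset.prod_congr rfl (fun i _ => hc i), Finset.prod_pow_eq_pow_sum, hsum]
    rw [hL, hR]
  set D : Fin (2^m) → (Fin m → ZMod 2) := fun l => digitsVec m l.val with hD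
  have hDbij : Function.Bijective D := by
    rw [Fintype.bijective_iff_injective_and_card]
    refine ⟨digitsVec_inj m, ?_⟩
    simp [Fintype.card_fun, ZMod.card]
  set w : ∀ i : Fin 3, Fin (d i) → ZMod 2 := fun i => bitVec (d i) (a i) with hw
  obtain ⟨y0, hy0⟩ := hΦbij.surjective w
  obtain ⟨l0, hl0⟩ := hDbij.surjective y0
  -- rewrite the count
  rw [digitalNet, Multiset.countP_map]
  have hcard : Multiset.card (Multiset.filter
      (fun l => ∀ i, ((a i : ℝ) / 2 ^ d i ≤ phiMap m ((C i).mulVec (digitsVec m l)) ∧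
        phiMap m ((C i).mulVec (digitsVec m l)) < ((a i : ℝ) + 1) / 2 ^ d i))
      (Multiset.range (2 ^ m))) = 1 := by
    have hfil : Multiset.filter
        (fun l => ∀ i, ((a i : ℝ) / 2 ^ d i ≤ phiMap m ((C i).mulVec (digitsVec m l)) ∧
          phiMap m ((C i).mulVec (digitsVec m l)) < ((a i : ℝ) + 1) / 2 ^ d i))
        (Multiset.range (2 ^ m))
        = ((Finset.range (2 ^ m)).filter
        (fun l => ∀ i, ((a i : ℝ) / 2 ^ d i ≤ phiMap m ((C i).mulVec (digitsVec m l)) ∧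
          phiMap m ((C i).mulVec (digitsVec m l)) < ((a i : ℝ) + 1) / 2 ^ d i))).val := by
      rw [Finset.filter_val, Finset.range_val]
    rw [hfil]
    have hqiff : ∀ l : ℕ,
        (∀ i, ((a i : ℝ) / 2 ^ d i ≤ phiMap m ((C i).mulVec (digitsVec m l)) ∧
          phiMap m ((C i).mulVec (digitsVec m l)) < ((a i : ℝ) + 1) / 2 ^ d i))
        ↔ Φ (digitsVec m l) = w := by
      intro l
      rw [funext_iff]
      apply forall_congr'
      intro i
      rw [interval_iff m (d i) (a i) (hd i) (ha i) ((C i).mulVec (digitsVec m l))]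
    have hsingle : (Finset.range (2 ^ m)).filter
        (fun l => ∀ i, ((a i : ℝ) / 2 ^ d i ≤ phiMap m ((C i).mulVec (digitsVec m l)) ∧
          phiMap m ((C i).mulVec (digitsVec m l)) < ((a i : ℝ) + 1) / 2 ^ d i))
        = {l0.val} := by
      rw [Finset.eq_singleton_iff_unique_mem]
      constructor
      · rw [Finset.mem_filter, Finset.mem_range]
        refine ⟨l0.isLt, ?_⟩
        rw [hqiff]
        rw [show digitsVec m l0.val = D l0 from rfl, hl0, hy0]
      · intro l hl
        rw [Finset.mem_filter, Finset.mem_range] at hl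
        obtain ⟨hlm, hlq⟩ := hl
        rw [hqiff] at hlq
        have h1 : digitsVec m l = y0 := hΦinj (by rw [hlq, hy0])
        have h2 : D ⟨l, hlm⟩ = D l0 := by rw [hl0]; exact h1
        have := hDbij.injective h2
        exact congrArg Fin.val this
    rw [hsingle]
    rfl
  rw [pow_zero]
  exact hcard
end
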